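/- arXiv:1007.5101 — 9 statements merged into one kernel-verified Lean document; each statement's English description precedes it below -/
import Mathlib

section
/- Let μ : ℝ → ℝ be positive, twice differentiable, and logarithmically convex on [0,∞) (i.e. μ·μ'' ≥ (μ')² pointwise). Define I(h) = ∫₀ʰ μ(t) dt for h ≥ 0. Then I is strictly increasing on [0,∞), and the composition μ ∘ I⁻¹ is convex on [0, ∞) (on the range of I). -/
open Set MeasureTheory intervalIntegral

open Topology

/-- For positive, twice differentiable, log-convex `μ` on `[0,∞)`,
the antiderivative `I h = ∫ t in 0..h, μ t` is strictly increasing on `[0,∞)`,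
and `μ ∘ I⁻¹` is convex on the image `I  [0,∞)`. -/

theorem stmt0 (μ μ' μ'' : ℝ → ℝ)
    (hpos : ∀ t ∈ Ici (0 : ℝ), 0 < μ t)
    (hd1 : ∀ t ∈ Ici (0 : ℝ), HasDerivAt μ (μ' t) t)
    (hd2 : ∀ t ∈ Ici (0 : ℝ), HasDerivAt μ' (μ'' t) t)
    (hlc : ∀ t ∈ Ici (0 : ℝ), (μ' t) ^ 2 ≤ μ t * μ'' t)
    (I : ℝ → ℝ) (hI : ∀ h, I h = ∫ t in (0 : ℝ)..h, μ t) :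
    StrictMonoOn I (Ici (0 : ℝ)) ∧
      ConvexOn ℝ (I '' Ici (0 : ℝ)) (fun x => μ (Function.invFunOn I (Ici 0) x)) := by
  have hμcont : ContinuousOn μ (Ici 0) :=
    fun t ht => (hd1 t ht).continuousAt.continuousWithinAt
  have hint : ∀ a b : ℝ, 0 ≤ a → 0 ≤ b → IntervalIntegrable μ volume a b := by
    intro a b ha hb
    apply ContinuousOn.intervalIntegrable
    exact hμcont.mono (fun t ht => le_trans (le_min ha hb) ht.1)
  -- strict monotonicity
  have hmono : StrictMonoOn I (Ici 0) := by
    intro a ha b hb hab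
    have h1 : I b - I a = ∫ t in a..b, μ t := by
      rw [hI, hI, intervalIntegral.integral_interval_sub_left (hint 0 b le_rfl hb)
        (hint 0 a le_rfl ha)]
    have h2 : 0 < ∫ t in a..b, μ t := by
      apply intervalIntegral.intervalIntegral_pos_of_pos_on (hint a b ha hb)
      · exact fun x hx => hpos x (le_of_lt (lt_of_le_of_lt ha hx.1))
      · exact hab
    linarith
  -- continuity of I on compact intervals
  have hIcont : ∀ b : ℝ, 0 ≤ b → ContinuousOn I (Icc 0 b) := by
    intro b hb
    have h := intervalIntegral.continuousOn_primitive_interval'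
      (hint 0 b le_rfl hb) left_mem_uIcc
    rw [uIcc_of_le hb] at h
    exact h.congr (fun x _ => hI x)
  -- derivative of I at interior points
  have hIderiv : ∀ x : ℝ, 0 < x → HasDerivAt I (μ x) x := by
    intro x hx
    have hmeas : StronglyMeasurableAtFilter μ (𝓝 x) volume :=
      ⟨Ioi 0, Ioi_mem_nhds hx,
        ((hμcont.mono Ioi_subset_Ici_self).aestronglyMeasurable measurableSet_Ioi)⟩
    have h := intervalIntegral.integral_hasDerivAt_right (hint 0 x le_rfl hx.le) hmeas
      (hd1 x hx.le).continuousAt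
    have heq : I = fun u => ∫ t in (0:ℝ)..u, μ t := funext hI
    rw [heq]
    exact h
  -- monotone logarithmic derivative
  have hgderiv : ∀ t ∈ Ici (0:ℝ),
      HasDerivAt (fun t => μ' t / μ t) ((μ'' t * μ t - μ' t * μ' t) / (μ t)^2) t :=
    fun t ht => (hd2 t ht).div (hd1 t ht) (hpos t ht).ne'
  have hgmono : MonotoneOn (fun t => μ' t / μ t) (Ici 0) := by
    apply monotoneOn_of_deriv_nonneg (convex_Ici 0)
    · exact fun t ht => (hgderiv t ht).continuousAt.continuousWithinAt
    · intro t ht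
      rw [interior_Ici] at ht
      exact (hgderiv t (mem_Ici.mpr (le_of_lt (mem_Ioi.mp ht)))).differentiableAt.differentiableWithinAt
    · intro t ht
      rw [interior_Ici] at ht
      rw [(hgderiv t (mem_Ici.mpr (mem_Ioi.mp ht).le)).deriv]
      apply div_nonneg _ (sq_nonneg _)
      nlinarith [hlc t (mem_Ici.mpr (mem_Ioi.mp ht).le), hpos t (mem_Ici.mpr (mem_Ioi.mp ht).le)]
  -- Cauchy MVT for slopes
  have key : ∀ a b : ℝ, 0 ≤ a → a < b →
      ∃ ξ ∈ Ioo a b, (μ b - μ a) / (I b - I a) = μ' ξ / μ ξ := by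
    intro a b ha hab
    have hb : (0:ℝ) ≤ b := ha.trans hab.le
    obtain ⟨ξ, hξ, heq⟩ := exists_ratio_hasDerivAt_eq_ratio_slope μ μ' hab
      (hμcont.mono (fun t ht => ha.trans ht.1))
      (fun x hx => hd1 x (le_of_lt (lt_of_le_of_lt ha hx.1)))
      I μ
      ((hIcont b hb).mono (fun t ht => ⟨ha.trans ht.1, ht.2⟩))
      (fun x hx => hIderiv x (lt_of_le_of_lt ha hx.1))
    refine ⟨ξ, hξ, ?_⟩
    have hξ0 : (0:ℝ) ≤ ξ := le_of_lt (lt_of_le_of_lt ha hξ.1)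
    have hIab : I a < I b := hmono ha hb hab
    have hμξ : 0 < μ ξ := hpos ξ hξ0
    rw [div_eq_div_iff (by linarith) (by linarith)]
    linear_combination -heq
  have hIinj : InjOn I (Ici 0) := hmono.injOn
  -- the image is order-connected, hence convex
  have hJ : OrdConnected (I '' Ici 0) := by
    constructor
    rintro x ⟨a, ha, rfl⟩ y ⟨b, hb, rfl⟩ z hz
    have hc : ContinuousOn I (uIcc a b) := by
      apply (hIcont (max a b) (le_max_of_le_left ha)).mono
      intro t ht
      exact ⟨le_trans (le_min ha hb) ht.1, ht.2⟩
    have := intermediate_value_uIcc hc (Icc_subset_uIcc hz)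
    obtain ⟨c, hc1, hc2⟩ := this
    exact ⟨c, le_trans (le_min ha hb) hc1.1, hc2⟩
  refine ⟨hmono, convexOn_of_slope_mono_adjacent (convex_iff_ordConnected.mpr hJ) ?_⟩
  intro x y z hx hz hxy hyz
  have hy : y ∈ I '' Ici 0 := hJ.out hx hz ⟨hxy.le, hyz.le⟩
  set a := Function.invFunOn I (Ici 0) x with ha_def
  set b := Function.invFunOn I (Ici 0) y with hb_def
  set c := Function.invFunOn I (Ici 0) z with hc_def
  have hxe : ∃ u ∈ Ici (0:ℝ), I u = x := by rwa [mem_image] at hx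
  have hye : ∃ u ∈ Ici (0:ℝ), I u = y := by rwa [mem_image] at hy
  have hze : ∃ u ∈ Ici (0:ℝ), I u = z := by rwa [mem_image] at hz
  have ha : a ∈ Ici (0:ℝ) := Function.invFunOn_mem hxe
  have hb : b ∈ Ici (0:ℝ) := Function.invFunOn_mem hye
  have hc : c ∈ Ici (0:ℝ) := Function.invFunOn_mem hze
  have hIa : I a = x := Function.invFunOn_eq hxe
  have hIb : I b = y := Function.invFunOn_eq hye
  have hIc : I c = z := Function.invFunOn_eq hze
  have hab : a < b := by
    rw [← hmono.lt_iff_lt ha hb, hIa, hIb]; exact hxy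
  have hbc : b < c := by
    rw [← hmono.lt_iff_lt hb hc, hIb, hIc]; exact hyz
  obtain ⟨ξ, hξ, hξeq⟩ := key a b ha hab
  obtain ⟨η, hη, hηeq⟩ := key b c hb hbc
  rw [← hIa, ← hIb, ← hIc, hξeq, hηeq]
  exact hgmono (le_of_lt (lt_of_le_of_lt ha hξ.1))
    (le_of_lt (lt_of_le_of_lt hb hη.1)) (le_of_lt (lt_trans hξ.2 hη.1))
end

section
/- Let μ : ℝ → ℝ be positive, continuous, and log-convex on [0,∞), and set I(h) = ∫₀ʰ μ. For any finite collection of weights w₁,…,w_r > 0 with ∑ wᵢ = 1 and heights h₁,…,h_r ≥ 0, if H is defined by I(H) = ∑ᵢ wᵢ I(hᵢ), then μ(H) ≤ ∑ᵢ wᵢ μ(hᵢ). -/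
open Set MeasureTheory intervalIntegral Finset

lemma expInt (c H a b : ℝ) (hc : c ≠ 0) :
    ∫ t in a..b, Real.exp (c * (t - H)) =
      (Real.exp (c * (b - H)) - Real.exp (c * (a - H))) / c := by
  have key : ∀ x : ℝ, HasDerivAt (fun t => Real.exp (c * (t - H)) / c)
      (Real.exp (c * (x - H))) x := by
    intro x
    have h1 : HasDerivAt (fun t : ℝ => c * (t - H)) c x := by
      simpa using ((hasDerivAt_id x).sub_const H).const_mul c
    have h3 := (h1.exp).div_const c
    rwa [mul_div_cancel_right₀ _ hc] at h3
  rw [intervalIntegral.integral_eq_sub_of_hasDerivAt (fun x _ => key x)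
    (Continuous.intervalIntegrable (by continuity) a b)]
  ring

lemma key_aux (μ : ℝ → ℝ)
    (hpos : ∀ t ∈ Ici (0 : ℝ), 0 < μ t)
    (hcont : ContinuousOn μ (Ici 0))
    (hlc : ConvexOn ℝ (Ici 0) (fun t => Real.log (μ t)))
    (H c x : ℝ) (hH : 0 ≤ H) (hx : 0 ≤ x)
    (hsub : ∀ t ∈ Ici (0 : ℝ), Real.log (μ H) + c * (t - H) ≤ Real.log (μ t)) :
    c * ∫ t in H..x, μ t ≤ μ x - μ H := by
  set f : ℝ → ℝ := fun t => Real.log (μ t) with hfdef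
  have hsub' : ∀ t ∈ Ici (0 : ℝ), f H + c * (t - H) ≤ f t := hsub
  have hμeq : ∀ t ∈ Ici (0 : ℝ), Real.exp (f t) = μ t := fun t ht => Real.exp_log (hpos t ht)
  have esub : ∀ t ∈ Ici (0 : ℝ), μ H * Real.exp (c * (t - H)) ≤ μ t := by
    intro t ht
    have h2 : Real.exp (f H + c * (t - H)) ≤ Real.exp (f t) := Real.exp_le_exp.mpr (hsub' t ht)
    rwa [Real.exp_add, hμeq t ht, hμeq H hH] at h2
  have hμint : ∀ a b : ℝ, 0 ≤ a → 0 ≤ b → IntervalIntegrable μ volume a b := by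
    intro a b ha hb
    apply ContinuousOn.intervalIntegrable
    exact hcont.mono (fun y hy => le_trans (le_inf ha hb) hy.1)
  rcases lt_trichotomy x H with hxH | rfl | hxH
  · -- x < H
    have hxmem : x ∈ Ici (0:ℝ) := hx
    rw [intervalIntegral.integral_symm]
    have hInn : (0:ℝ) ≤ ∫ t in x..H, μ t :=
      intervalIntegral.integral_nonneg hxH.le (fun u hu => (hpos u (le_trans hx hu.1)).le)
    rcases lt_trichotomy c 0 with hc | rfl | hc
    · -- c < 0 : chord upper bound on [x, H]
      set k : ℝ := (f x - f H) / (x - H) with hk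
      have hxne : x - H ≠ 0 := by linarith
      have hkxH : k * (x - H) = f x - f H := div_mul_cancel₀ _ hxne
      have hkc : k ≤ c := by
        rw [hk, div_le_iff_of_neg (by linarith : x - H < 0)]
        linarith [hsub' x hxmem]
      have hkneg : k < 0 := lt_of_le_of_lt hkc hc
      have hμx : μ x = μ H * Real.exp (k * (x - H)) := by
        rw [hkxH, Real.exp_sub, hμeq x hxmem, hμeq H hH]
        field_simp [(hpos H hH).ne']
      have chord : ∀ t ∈ Icc x H, μ t ≤ μ H * Real.exp (k * (t - H)) := by
        intro t ht
        rcases eq_or_lt_of_le ht.1 with rfl | hlt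
        · rw [← hμx]
        rcases eq_or_lt_of_le ht.2 with rfl | hlt2
        · simp
        have htmem : t ∈ Ici (0:ℝ) := le_trans hx ht.1
        have hs : (f x - f H) / (x - H) ≤ (f t - f H) / (t - H) :=
          hlc.secant_mono hH hxmem htmem (by linarith) (by linarith) hlt.le
        have h2 := mul_le_mul_of_nonpos_right hs (by linarith : t - H ≤ 0)
        rw [div_mul_cancel₀ _ (by linarith : t - H ≠ 0)] at h2
        have hft : f t ≤ f H + k * (t - H) := by linarith
        calc μ t = Real.exp (f t) := (hμeq t htmem).symm
          _ ≤ Real.exp (f H + k * (t - H)) := Real.exp_le_exp.mpr hft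
          _ = μ H * Real.exp (k * (t - H)) := by rw [Real.exp_add, hμeq H hH]
      have hup : (∫ t in x..H, μ t) ≤ ∫ t in x..H, μ H * Real.exp (k * (t - H)) :=
        intervalIntegral.integral_mono_on hxH.le (hμint x H hx hH)
          (Continuous.intervalIntegrable (by fun_prop) _ _) chord
      have hval2 : (∫ t in x..H, μ H * Real.exp (k * (t - H))) = (μ H - μ x) / k := by
        rw [intervalIntegral.integral_const_mul, expInt _ _ _ _ hkneg.ne,
          show k * (H - H) = 0 by ring, Real.exp_zero, hμx]
        ring
      rw [hval2] at hup
      have h5 : μ H - μ x ≤ (∫ t in x..H, μ t) * k := by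
        rwa [le_div_iff_of_neg hkneg] at hup
      have h6 : k * (∫ t in x..H, μ t) ≤ c * ∫ t in x..H, μ t :=
        mul_le_mul_of_nonneg_right hkc hInn
      nlinarith
    · have h1 := esub x hxmem
      rw [show (0:ℝ) * (x - H) = 0 by ring, Real.exp_zero, mul_one] at h1
      nlinarith
    · -- c > 0 : lower bound by subgradient exponential
      have hlow : (∫ t in x..H, μ H * Real.exp (c * (t - H))) ≤ ∫ t in x..H, μ t :=
        intervalIntegral.integral_mono_on hxH.le
          (Continuous.intervalIntegrable (by fun_prop) _ _) (hμint x H hx hH)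
          (fun t ht => esub t (le_trans hx ht.1))
      have hval : (∫ t in x..H, μ H * Real.exp (c * (t - H)))
          = μ H * ((1 - Real.exp (c * (x - H))) / c) := by
        rw [intervalIntegral.integral_const_mul, expInt _ _ _ _ hc.ne',
          show c * (H - H) = 0 by ring, Real.exp_zero]
      rw [hval] at hlow
      have h5 : μ H * (1 - Real.exp (c * (x - H))) ≤ c * ∫ t in x..H, μ t := by
        have h2 := mul_le_mul_of_nonneg_left hlow hc.le
        have h3 : c * (μ H * ((1 - Real.exp (c * (x - H))) / c))
            = μ H * (1 - Real.exp (c * (x - H))) := by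
          field_simp
        linarith [h2, h3.symm.le]
      have h6 := esub x hxmem
      nlinarith
  · simp
  · -- H < x
    have hxmem : x ∈ Ici (0:ℝ) := hx
    have hInn : (0:ℝ) ≤ ∫ t in H..x, μ t :=
      intervalIntegral.integral_nonneg hxH.le (fun u hu => (hpos u (le_trans hH hu.1)).le)
    rcases lt_trichotomy c 0 with hc | rfl | hc
    · -- c < 0 : lower bound by subgradient exponential, multiply by c flips
      have hlow : (∫ t in H..x, μ H * Real.exp (c * (t - H))) ≤ ∫ t in H..x, μ t :=
        intervalIntegral.integral_mono_on hxH.le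
          (Continuous.intervalIntegrable (by fun_prop) _ _) (hμint H x hH hx)
          (fun t ht => esub t (le_trans hH ht.1))
      have hval : (∫ t in H..x, μ H * Real.exp (c * (t - H)))
          = μ H * ((Real.exp (c * (x - H)) - 1) / c) := by
        rw [intervalIntegral.integral_const_mul, expInt _ _ _ _ hc.ne,
          show c * (H - H) = 0 by ring, Real.exp_zero]
      rw [hval] at hlow
      have h2 := mul_le_mul_of_nonpos_left hlow hc.le
      have h3 : c * (μ H * ((Real.exp (c * (x - H)) - 1) / c))
          = μ H * (Real.exp (c * (x - H)) - 1) := by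
        field_simp
        rw [mul_assoc, mul_div_cancel_left₀ _ hc.ne]
      have h6 := esub x hxmem
      nlinarith
    · have h1 := esub x hxmem
      rw [show (0:ℝ) * (x - H) = 0 by ring, Real.exp_zero, mul_one] at h1
      nlinarith
    · -- c > 0 : chord upper bound on [H, x]
      set k : ℝ := (f x - f H) / (x - H) with hk
      have hxne : x - H ≠ 0 := by linarith
      have hkxH : k * (x - H) = f x - f H := div_mul_cancel₀ _ hxne
      have hck : c ≤ k := by
        rw [hk, le_div_iff₀ (by linarith : 0 < x - H)]
        linarith [hsub' x hxmem]
      have hkpos : 0 < k := lt_of_lt_of_le hc hck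
      have hμx : μ x = μ H * Real.exp (k * (x - H)) := by
        rw [hkxH, Real.exp_sub, hμeq x hxmem, hμeq H hH]
        field_simp [(hpos H hH).ne']
      have chord : ∀ t ∈ Icc H x, μ t ≤ μ H * Real.exp (k * (t - H)) := by
        intro t ht
        rcases eq_or_lt_of_le ht.1 with rfl | hlt
        · simp
        rcases eq_or_lt_of_le ht.2 with rfl | hlt2
        · rw [← hμx]
        have htmem : t ∈ Ici (0:ℝ) := le_trans hH ht.1
        have hs : (f t - f H) / (t - H) ≤ (f x - f H) / (x - H) :=
          hlc.secant_mono hH htmem hxmem (by linarith) (by linarith) ht.2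
        have h2 := mul_le_mul_of_nonneg_right hs (by linarith : (0:ℝ) ≤ t - H)
        rw [div_mul_cancel₀ _ (by linarith : t - H ≠ 0)] at h2
        have hft : f t ≤ f H + k * (t - H) := by linarith
        calc μ t = Real.exp (f t) := (hμeq t htmem).symm
          _ ≤ Real.exp (f H + k * (t - H)) := Real.exp_le_exp.mpr hft
          _ = μ H * Real.exp (k * (t - H)) := by rw [Real.exp_add, hμeq H hH]
      have hup : (∫ t in H..x, μ t) ≤ ∫ t in H..x, μ H * Real.exp (k * (t - H)) :=
        intervalIntegral.integral_mono_on hxH.le (hμint H x hH hx)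
          (Continuous.intervalIntegrable (by fun_prop) _ _) chord
      have hval2 : (∫ t in H..x, μ H * Real.exp (k * (t - H))) = (μ x - μ H) / k := by
        rw [intervalIntegral.integral_const_mul, expInt _ _ _ _ hkpos.ne',
          show k * (H - H) = 0 by ring, Real.exp_zero, hμx]
        ring
      rw [hval2] at hup
      have h5 : k * (∫ t in H..x, μ t) ≤ μ x - μ H := by
        rw [le_div_iff₀ hkpos] at hup
        linarith
      have h6 : c * (∫ t in H..x, μ t) ≤ k * ∫ t in H..x, μ t :=
        mul_le_mul_of_nonneg_right hck hInn
      linarith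

/-- Jensen-type inequality for log-convex `μ`: if `I(H)` is the
weighted average of `I(hᵢ)`, then `μ(H) ≤ ∑ wᵢ μ(hᵢ)`. -/
theorem stmt1 (μ : ℝ → ℝ)
    (hpos : ∀ t ∈ Ici (0 : ℝ), 0 < μ t)
    (hcont : ContinuousOn μ (Ici 0))
    (hlc : ConvexOn ℝ (Ici 0) (fun t => Real.log (μ t)))
    (I : ℝ → ℝ) (hI : ∀ h, I h = ∫ t in (0 : ℝ)..h, μ t)
    (r : ℕ) (w h : Fin r → ℝ)
    (hw : ∀ i, 0 < w i) (hwsum : ∑ i, w i = 1) (hh : ∀ i, 0 ≤ h i)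
    (H : ℝ) (hH : 0 ≤ H) (hHdef : I H = ∑ i, w i * I (h i)) :
    μ H ≤ ∑ i, w i * μ (h i) := by
  have hμint : ∀ a b : ℝ, 0 ≤ a → 0 ≤ b → IntervalIntegrable μ volume a b := by
    intro a b ha hb
    apply ContinuousOn.intervalIntegrable
    exact hcont.mono (fun y hy => le_trans (le_inf ha hb) hy.1)
  rcases eq_or_lt_of_le hH with rfl | hHpos
  · -- H = 0 : all h i must be 0
    have hI0 : I 0 = 0 := by rw [hI]; simp
    have hInn : ∀ i, 0 ≤ I (h i) := by
      intro i
      rw [hI]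
      exact intervalIntegral.integral_nonneg (hh i) (fun u hu => (hpos u hu.1).le)
    have hzero : ∀ i, h i = 0 := by
      intro i
      by_contra hne
      have hpos_i : 0 < h i := lt_of_le_of_ne (hh i) (Ne.symm hne)
      have hIpos : 0 < I (h i) := by
        rw [hI]
        exact intervalIntegral.intervalIntegral_pos_of_pos_on
          (hμint 0 (h i) le_rfl (hh i)) (fun u hu => hpos u hu.1.le) hpos_i
      have hsum0 : ∑ i, w i * I (h i) = 0 := by rw [← hHdef, hI0]
      have := (Finset.sum_eq_zero_iff_of_nonneg
        (fun j _ => mul_nonneg (hw j).le (hInn j))).mp hsum0 i (Finset.mem_univ i)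
      nlinarith [hw i]
    have heq : ∑ i, w i * μ (h i) = μ 0 := by
      calc ∑ i, w i * μ (h i) = ∑ i, w i * μ 0 :=
            Finset.sum_congr rfl (fun i _ => by rw [hzero i])
        _ = μ 0 := by rw [← Finset.sum_mul, hwsum, one_mul]
    linarith
  · -- H > 0 : construct a subgradient of log μ at H
    set f : ℝ → ℝ := fun t => Real.log (μ t) with hfdef
    have hHmem : H ∈ Ici (0:ℝ) := hH
    set s : ℝ → ℝ := fun y => (f y - f H) / (y - H) with hsdef
    set S : Set ℝ := s '' Ico 0 H with hSdef
    have hne : S.Nonempty := ⟨s 0, 0, ⟨le_refl 0, hHpos⟩, rfl⟩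
    have hbdd : BddAbove S := by
      refine ⟨s (H + 1), ?_⟩
      rintro _ ⟨y, hy, rfl⟩
      exact hlc.secant_mono hHmem hy.1 (by simp; linarith : (H + 1 : ℝ) ∈ Ici (0:ℝ))
        (by linarith [hy.2] : y ≠ H) (by linarith : (H + 1 : ℝ) ≠ H) (by linarith [hy.2])
    set c : ℝ := sSup S with hcdef
    have hsub : ∀ t ∈ Ici (0 : ℝ), Real.log (μ H) + c * (t - H) ≤ Real.log (μ t) := by
      intro t ht
      have htmem : t ∈ Ici (0:ℝ) := ht
      rcases lt_trichotomy t H with hlt | rfl | hlt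
      · have h1 : s t ≤ c := le_csSup hbdd ⟨t, ⟨ht, hlt⟩, rfl⟩
        have h2 := mul_le_mul_of_nonpos_right h1 (by linarith : t - H ≤ 0)
        rw [hsdef] at h2
        simp only at h2
        rw [div_mul_cancel₀ _ (by linarith : t - H ≠ 0)] at h2
        have : f t = Real.log (μ t) := rfl
        have : f H = Real.log (μ H) := rfl
        simp only [hfdef] at h2
        linarith
      · simp
      · have h1 : c ≤ s t := by
          apply csSup_le hne
          rintro _ ⟨y, hy, rfl⟩
          exact hlc.secant_mono hHmem hy.1 htmem (by linarith [hy.2] : y ≠ H)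
            (by linarith : t ≠ H) (by linarith [hy.2])
        have h2 := mul_le_mul_of_nonneg_right h1 (by linarith : (0:ℝ) ≤ t - H)
        rw [hsdef] at h2
        simp only at h2
        rw [div_mul_cancel₀ _ (by linarith : t - H ≠ 0)] at h2
        simp only [hfdef] at h2
        linarith
    have key : ∀ i, μ H + c * (I (h i) - I H) ≤ μ (h i) := by
      intro i
      have hIdiff : I (h i) - I H = ∫ t in H..(h i), μ t := by
        rw [hI (h i), hI H]
        exact intervalIntegral.integral_interval_sub_left
          (hμint 0 (h i) le_rfl (hh i)) (hμint 0 H le_rfl hH)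
      have := key_aux μ hpos hcont hlc H c (h i) hH (hh i) hsub
      rw [← hIdiff] at this
      linarith
    have hsum_eq : ∑ i, w i * (μ H + c * (I (h i) - I H)) = μ H := by
      have e1 : ∑ i, w i * (μ H + c * (I (h i) - I H))
          = (∑ i, w i) * μ H + c * (∑ i, w i * I (h i)) - c * ((∑ i, w i) * I H) := by
        calc ∑ i, w i * (μ H + c * (I (h i) - I H))
            = ∑ i, (w i * μ H + c * (w i * I (h i)) - c * (w i * I H)) :=
              Finset.sum_congr rfl (fun i _ => by ring)
          _ = (∑ i, w i * μ H) + (∑ i, c * (w i * I (h i))) - (∑ i, c * (w i * I H)) := by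
              rw [Finset.sum_sub_distrib, Finset.sum_add_distrib]
          _ = (∑ i, w i) * μ H + c * (∑ i, w i * I (h i)) - c * ((∑ i, w i) * I H) := by
              rw [← Finset.sum_mul, ← Finset.mul_sum, ← Finset.mul_sum, ← Finset.sum_mul]
      rw [e1, hwsum, ← hHdef]
      ring
    calc μ H = ∑ i, w i * (μ H + c * (I (h i) - I H)) := hsum_eq.symm
      _ ≤ ∑ i, w i * μ (h i) :=
        Finset.sum_le_sum (fun i _ => mul_le_mul_of_nonneg_left (key i) (hw i).le)
end

section
/- Let μ : ℝ → ℝ be positive, continuous, and log-convex on [0,∞), I(h) = ∫₀ʰ μ. Suppose ℓ : Ω → [0,∞) is measurable on a probability space (Ω, 𝜈), H satisfies I(H) = ∫_Ω I(ℓ) d𝜈, and equality μ(H) = ∫_Ω μ(ℓ) d𝜈 holds. If moreover log μ is strictly convex on [0,∞), then ℓ = H 𝜈-almost everywhere. -/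
open Set MeasureTheory intervalIntegral

lemma my_ii (μ : ℝ → ℝ) (hcont : ContinuousOn μ (Ici 0)) {a b : ℝ} (ha : 0 ≤ a) (hb : 0 ≤ b) :
    IntervalIntegrable μ MeasureTheory.volume a b :=
  (hcont.mono (fun t ht => le_trans (le_min ha hb) ht.1)).intervalIntegrable

lemma my_int_exp (p H a b : ℝ) (hp : p ≠ 0) :
    ∫ t in a..b, Real.exp (p*(t-H)) = (Real.exp (p*(b-H)) - Real.exp (p*(a-H)))/p := by
  have h : ∀ t : ℝ, HasDerivAt (fun t => Real.exp (p*(t-H))/p) (Real.exp (p*(t-H))) t := by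
    intro t
    have h1 : HasDerivAt (fun t : ℝ => p*(t-H)) p t := by
      simpa using ((hasDerivAt_id t).sub_const H).const_mul p
    have := (Real.hasDerivAt_exp (p*(t-H))).comp t h1
    simpa [mul_div_cancel_right₀ _ hp] using this.div_const p
  rw [intervalIntegral.integral_eq_sub_of_hasDerivAt (fun t _ => h t)
    ((Real.continuous_exp.comp (by continuity)).intervalIntegrable a b)]
  ring

lemma my_key (μ : ℝ → ℝ)
    (hpos : ∀ t ∈ Ici (0 : ℝ), 0 < μ t)
    (hcont : ContinuousOn μ (Ici 0))
    (hlc : ConvexOn ℝ (Ici 0) (fun t => Real.log (μ t)))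
    {H h p : ℝ} (hH : 0 ≤ H) (hh : 0 ≤ h) (hne : h ≠ H)
    (hp : ∀ t ∈ Ici (0:ℝ), t ≠ H → Real.log (μ H) + p * (t - H) < Real.log (μ t)) :
    μ H + p * (∫ t in H..h, μ t) < μ h := by
  set f : ℝ → ℝ := fun t => Real.log (μ t) with hf
  have hμH : 0 < μ H := hpos H hH
  have hμh : 0 < μ h := hpos h hh
  -- tangent bounds
  have htan : ∀ t ∈ Ici (0:ℝ), μ H * Real.exp (p*(t-H)) ≤ μ t := by
    intro t ht
    rcases eq_or_ne t H with rfl | htne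
    · simp
    · have := le_of_lt (hp t ht htne)
      calc μ H * Real.exp (p*(t-H)) = Real.exp (f H + p*(t-H)) := by
            rw [Real.exp_add, Real.exp_log hμH]
        _ ≤ Real.exp (f t) := Real.exp_le_exp.2 this
        _ = μ t := Real.exp_log (hpos t ht)
  have htan' : μ H * Real.exp (p*(h-H)) < μ h := by
    calc μ H * Real.exp (p*(h-H)) = Real.exp (f H + p*(h-H)) := by
          rw [Real.exp_add, Real.exp_log hμH]
      _ < Real.exp (f h) := Real.exp_lt_exp.2 (hp h hh hne)
      _ = μ h := Real.exp_log hμh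
  have hiiμ : IntervalIntegrable μ MeasureTheory.volume H h := my_ii μ hcont hH hh
  have hiiE : ∀ c : ℝ, IntervalIntegrable (fun t => μ H * Real.exp (c*(t-H)))
      MeasureTheory.volume H h := fun c =>
    (Continuous.intervalIntegrable (by continuity) H h)
  rcases lt_or_gt_of_ne hne with hlt | hgt
  · -- h < H
    have hsymm : (∫ t in H..h, μ t) = -∫ t in h..H, μ t := intervalIntegral.integral_symm h H
    rcases lt_trichotomy p 0 with hp0 | hp0 | hp0
    · -- p < 0 : chord bound on [h, H]
      set q : ℝ := (f h - f H)/(h - H) with hq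
      have hqp : q < p := by
        have := hp h hh hne
        rw [hq]
        rw [div_lt_iff_of_neg (by linarith : h - H < 0)]
        linarith
      have hq0 : q < 0 := lt_trans hqp hp0
      have hμhH : μ H < μ h := by
        have : μ h = μ H * Real.exp (q*(h-H)) := by
          rw [hq]; rw [div_mul_cancel₀ _ (by intro hc; apply hne; linarith : h - H ≠ 0)]
          rw [Real.exp_sub, Real.exp_log hμH, Real.exp_log hμh]; field_simp
        rw [this]
        nlinarith [Real.one_lt_exp_iff.2 (show (0:ℝ) < q*(h-H) by nlinarith), hμH]
      have hμheq : μ h = μ H * Real.exp (q*(h-H)) := by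
        rw [hq]; rw [div_mul_cancel₀ _ (by intro hc; apply hne; linarith : h - H ≠ 0)]
        rw [Real.exp_sub, Real.exp_log hμH, Real.exp_log hμh]; field_simp
      have hchord : ∀ t ∈ Icc h H, μ t ≤ μ H * Real.exp (q*(t-H)) := by
        intro t ht
        have ht0 : (0:ℝ) ≤ t := le_trans hh ht.1
        have hft : f t - f H ≤ q * (t - H) := by
          rcases eq_or_ne t H with rfl | htne
          · simp
          · have hsec := hlc.secant_mono (mem_Ici.2 hH) (mem_Ici.2 hh) (mem_Ici.2 ht0)
              hne htne ht.1
            have htH : t - H < 0 :=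
              lt_of_le_of_ne (by linarith [ht.2]) (sub_ne_zero.2 htne)
            rw [hq] at *
            rw [le_div_iff_of_neg htH] at hsec
            linarith
        calc μ t = Real.exp (f t) := (Real.exp_log (hpos t ht0)).symm
          _ ≤ Real.exp (f H + q*(t-H)) := Real.exp_le_exp.2 (by linarith)
          _ = μ H * Real.exp (q*(t-H)) := by rw [Real.exp_add, Real.exp_log hμH]
      have hmono : (∫ t in h..H, μ t) ≤ ∫ t in h..H, (fun t => μ H * Real.exp (q*(t-H))) t :=
        intervalIntegral.integral_mono_on (le_of_lt hlt) hiiμ.symm ((hiiE q).symm) hchord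
      have hcomp : (∫ t in h..H, (fun t => μ H * Real.exp (q*(t-H))) t)
          = μ H * ((1 - Real.exp (q*(h-H)))/q) := by
        rw [intervalIntegral.integral_const_mul, my_int_exp q H h H (ne_of_lt hq0)]
        simp
      set B : ℝ := μ H * ((1 - Real.exp (q*(h-H)))/q) with hB
      have hqB : q * B = μ H - μ h := by
        have h0 : q * B = μ H * ((1 - Real.exp (q*(h-H)))/q*q) := by rw [hB]; ring
        rw [h0, div_mul_cancel₀ _ (ne_of_lt hq0), hμheq]; ring
      have hBpos : 0 < B := by nlinarith
      have hAB : (∫ t in h..H, μ t) ≤ B := by rw [← hcomp]; exact hmono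
      have h1 : p * B ≤ p * ∫ t in h..H, μ t :=
        mul_le_mul_of_nonpos_left hAB (le_of_lt hp0)
      have h2 : q * B < p * B := mul_lt_mul_of_pos_right hqp hBpos
      rw [hsymm]
      linarith
    · -- p = 0
      subst hp0
      simpa using (by simpa using htan' : μ H * Real.exp 0 < μ h)
    · -- p > 0 : tangent bound
      have hmono : (∫ t in h..H, (fun t => μ H * Real.exp (p*(t-H))) t) ≤ ∫ t in h..H, μ t := by
        apply intervalIntegral.integral_mono_on (le_of_lt hlt) ((hiiE p).symm) hiiμ.symm
        intro t ht
        exact htan t (le_trans hh ht.1)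
      have hcomp : (∫ t in h..H, (fun t => μ H * Real.exp (p*(t-H))) t)
          = μ H * ((1 - Real.exp (p*(h-H)))/p) := by
        rw [intervalIntegral.integral_const_mul, my_int_exp p H h H (ne_of_gt hp0)]
        simp
      rw [hsymm]
      have : μ H - p * ∫ t in h..H, μ t ≤ μ H - p * (μ H * ((1 - Real.exp (p*(h-H)))/p)) := by
        nlinarith [hmono, hcomp]
      calc μ H + p * -∫ t in h..H, μ t = μ H - p * ∫ t in h..H, μ t := by ring
        _ ≤ μ H - p * (μ H * ((1 - Real.exp (p*(h-H)))/p)) := this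
        _ = μ H * Real.exp (p*(h-H)) := by field_simp; ring
        _ < μ h := htan'
  · -- h > H
    rcases lt_trichotomy p 0 with hp0 | hp0 | hp0
    · -- p < 0 : tangent bound
      have hmono : (∫ t in H..h, (fun t => μ H * Real.exp (p*(t-H))) t) ≤ ∫ t in H..h, μ t := by
        apply intervalIntegral.integral_mono_on (le_of_lt hgt) (hiiE p) hiiμ
        intro t ht
        exact htan t (le_trans hH ht.1)
      have hcomp : (∫ t in H..h, (fun t => μ H * Real.exp (p*(t-H))) t)
          = μ H * ((Real.exp (p*(h-H)) - 1)/p) := by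
        rw [intervalIntegral.integral_const_mul, my_int_exp p H H h (ne_of_lt hp0)]
        simp
      have h1 : p * (∫ t in H..h, μ t) ≤ p * (μ H * ((Real.exp (p*(h-H)) - 1)/p)) := by
        rw [← hcomp]
        exact mul_le_mul_of_nonpos_left hmono (le_of_lt hp0)
      calc μ H + p * (∫ t in H..h, μ t) ≤ μ H + p * (μ H * ((Real.exp (p*(h-H)) - 1)/p)) := by
            linarith
        _ = μ H + μ H * ((Real.exp (p*(h-H)) - 1)/p*p) := by ring
        _ = μ H * Real.exp (p*(h-H)) := by
            rw [div_mul_cancel₀ _ (ne_of_lt hp0)]; ring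
        _ < μ h := htan'
    · -- p = 0
      subst hp0
      simpa using (by simpa using htan' : μ H * Real.exp 0 < μ h)
    · -- p > 0 : chord bound
      set q : ℝ := (f h - f H)/(h - H) with hq
      have hhH : (0:ℝ) < h - H := by linarith
      have hpq : p < q := by
        have := hp h hh hne
        rw [hq, lt_div_iff₀ hhH]
        linarith
      have hq0 : (0:ℝ) < q := lt_trans hp0 hpq
      have hμheq : μ h = μ H * Real.exp (q*(h-H)) := by
        rw [hq]; rw [div_mul_cancel₀ _ (ne_of_gt hhH)]
        rw [Real.exp_sub, Real.exp_log hμH, Real.exp_log hμh]; field_simp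
      have hchord : ∀ t ∈ Icc H h, μ t ≤ μ H * Real.exp (q*(t-H)) := by
        intro t ht
        have ht0 : (0:ℝ) ≤ t := le_trans hH ht.1
        have hft : f t - f H ≤ q * (t - H) := by
          rcases eq_or_ne t H with rfl | htne
          · simp
          · have hsec := hlc.secant_mono (mem_Ici.2 hH) (mem_Ici.2 ht0) (mem_Ici.2 hh)
              htne hne ht.2
            have htH : 0 < t - H :=
              lt_of_le_of_ne (by linarith [ht.1]) (Ne.symm (sub_ne_zero.2 htne))
            rw [hq] at *
            rw [div_le_div_iff₀ htH hhH] at hsec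
            rw [div_mul_eq_mul_div, le_div_iff₀ hhH]
            linarith
        calc μ t = Real.exp (f t) := (Real.exp_log (hpos t ht0)).symm
          _ ≤ Real.exp (f H + q*(t-H)) := Real.exp_le_exp.2 (by linarith)
          _ = μ H * Real.exp (q*(t-H)) := by rw [Real.exp_add, Real.exp_log hμH]
      have hmono : (∫ t in H..h, μ t) ≤ ∫ t in H..h, (fun t => μ H * Real.exp (q*(t-H))) t :=
        intervalIntegral.integral_mono_on (le_of_lt hgt) hiiμ (hiiE q) hchord
      have hcomp : (∫ t in H..h, (fun t => μ H * Real.exp (q*(t-H))) t)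
          = μ H * ((Real.exp (q*(h-H)) - 1)/q) := by
        rw [intervalIntegral.integral_const_mul, my_int_exp q H H h (ne_of_gt hq0)]
        simp
      set B : ℝ := μ H * ((Real.exp (q*(h-H)) - 1)/q) with hB
      have hqB : q * B = μ h - μ H := by
        have h0 : q * B = μ H * ((Real.exp (q*(h-H)) - 1)/q*q) := by rw [hB]; ring
        rw [h0, div_mul_cancel₀ _ (ne_of_gt hq0), hμheq]; ring
      have hBpos : 0 < B := by
        have hE : 1 < Real.exp (q*(h-H)) := Real.one_lt_exp_iff.2 (by positivity)
        rw [hB]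
        exact mul_pos hμH (div_pos (by linarith) hq0)
      have hAB : (∫ t in H..h, μ t) ≤ B := by rw [← hcomp]; exact hmono
      have h1 : p * (∫ t in H..h, μ t) ≤ p * B :=
        mul_le_mul_of_nonneg_left hAB (le_of_lt hp0)
      have h2 : p * B < q * B := mul_lt_mul_of_pos_right hpq hBpos
      linarith


lemma my_subgrad (f : ℝ → ℝ) (hf : StrictConvexOn ℝ (Ici 0) f) {H : ℝ} (hH : 0 < H) :
    ∃ p : ℝ, ∀ t ∈ Ici (0:ℝ), t ≠ H → f H + p * (t - H) < f t := by
  set S : Set ℝ := (fun t => (f t - f H) / (t - H)) '' (Ico 0 H) with hS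
  have hHmem : H ∈ Ici (0:ℝ) := le_of_lt hH
  have hne : S.Nonempty := ⟨_, ⟨0, ⟨le_refl _, hH⟩, rfl⟩⟩
  have hbdd : BddAbove S := by
    refine ⟨(f (H+1) - f H) / (H + 1 - H), ?_⟩
    rintro s ⟨t, ht, rfl⟩
    exact le_of_lt (hf.secant_strict_mono hHmem (ht.1 : (0:ℝ) ≤ t)
      (by linarith : (0:ℝ) ≤ H+1) (ne_of_lt ht.2) (by linarith) (by linarith [ht.2]))
  refine ⟨sSup S, fun t ht htne => ?_⟩
  rcases lt_or_gt_of_ne htne with hlt | hgt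
  · -- t < H : slope t H < slope mid H ≤ sSup S
    have hmid : (t+H)/2 ∈ Ico (0:ℝ) H := ⟨by simp at ht; linarith, by linarith⟩
    have h1 : (f t - f H) / (t - H) < (f ((t+H)/2) - f H) / ((t+H)/2 - H) :=
      hf.secant_strict_mono hHmem ht (hmid.1 : (0:ℝ) ≤ (t+H)/2)
        htne (ne_of_lt hmid.2) (by simp only [mem_Ici] at ht; linarith)
    have h2 : (f ((t+H)/2) - f H) / ((t+H)/2 - H) ≤ sSup S :=
      le_csSup hbdd ⟨_, hmid, rfl⟩
    have h3 : (f t - f H) / (t - H) < sSup S := lt_of_lt_of_le h1 h2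
    have htH : t - H < 0 := by linarith
    nlinarith [(div_lt_iff_of_neg htH).1 h3]
  · -- t > H : sSup S ≤ slope H mid < slope H t
    have hmid : (0:ℝ) ≤ (H+t)/2 := by linarith
    have h2 : sSup S ≤ (f ((H+t)/2) - f H) / ((H+t)/2 - H) := by
      apply csSup_le hne
      rintro s ⟨u, hu, rfl⟩
      exact le_of_lt (hf.secant_strict_mono hHmem hu.1 hmid (ne_of_lt hu.2)
        (by intro hh; nlinarith [hu.2]) (by linarith [hu.2]))
    have h1 : (f ((H+t)/2) - f H) / ((H+t)/2 - H) < (f t - f H) / (t - H) :=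
      hf.secant_strict_mono hHmem hmid ht (by intro hh; nlinarith) htne (by linarith)
    have h3 : sSup S < (f t - f H) / (t - H) := lt_of_le_of_lt h2 h1
    have htH : 0 < t - H := by linarith
    nlinarith [(lt_div_iff₀ htH).1 h3]


/-- equality case. If `log μ` is strictly convex and the
Jensen-type inequality is an equality, then `ℓ = H` almost everywhere. -/
theorem stmt3 (μ : ℝ → ℝ)
    (hpos : ∀ t ∈ Ici (0 : ℝ), 0 < μ t)
    (hcont : ContinuousOn μ (Ici 0))
    (hlc : ConvexOn ℝ (Ici 0) (fun t => Real.log (μ t)))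
    (hstrict : StrictConvexOn ℝ (Ici 0) (fun t => Real.log (μ t)))
    (I : ℝ → ℝ) (hI : ∀ h, I h = ∫ t in (0 : ℝ)..h, μ t)
    {Ω : Type*} [MeasurableSpace Ω] (ν : Measure Ω) [IsProbabilityMeasure ν]
    (ℓ : Ω → ℝ) (hℓmeas : Measurable ℓ) (hℓnonneg : ∀ q, 0 ≤ ℓ q)
    (hint1 : Integrable (fun q => μ (ℓ q)) ν)
    (hint2 : Integrable (fun q => I (ℓ q)) ν)
    (H : ℝ) (hH : 0 ≤ H)
    (hHdef : I H = ∫ q, I (ℓ q) ∂ν)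
    (heq : μ H = ∫ q, μ (ℓ q) ∂ν) :
    ∀ᵐ q ∂ν, ℓ q = H := by
  have hIdiff : ∀ h : ℝ, 0 ≤ h → I h - I H = ∫ t in H..h, μ t := by
    intro h hh
    have := intervalIntegral.integral_add_adjacent_intervals
      (my_ii μ hcont (le_refl (0:ℝ)) hH) (my_ii μ hcont hH hh)
    rw [hI, hI, ← this]; ring
  have hIpos : ∀ h : ℝ, 0 < h → 0 < I h := by
    intro h h0
    rw [hI]
    exact intervalIntegral.intervalIntegral_pos_of_pos_on
      (my_ii μ hcont (le_refl (0:ℝ)) h0.le)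
      (fun t ht => hpos t (le_of_lt ht.1)) h0
  have hInonneg : ∀ h : ℝ, 0 ≤ h → 0 ≤ I h := by
    intro h h0
    rcases eq_or_lt_of_le h0 with rfl | h0'
    · rw [hI]; simp
    · exact le_of_lt (hIpos h h0')
  by_cases hH0 : H = 0
  · subst hH0
    have h0 : I 0 = 0 := by rw [hI]; simp
    rw [h0] at hHdef
    have hae : (fun q => I (ℓ q)) =ᵐ[ν] 0 :=
      (integral_eq_zero_iff_of_nonneg (fun q => hInonneg _ (hℓnonneg q)) hint2).1 hHdef.symm
    filter_upwards [hae] with q hq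
    by_contra hne
    have hlq : 0 < ℓ q := lt_of_le_of_ne (hℓnonneg q) (Ne.symm hne)
    exact absurd hq (ne_of_gt (hIpos _ hlq))
  · have hHpos : 0 < H := lt_of_le_of_ne hH (Ne.symm hH0)
    obtain ⟨p, hp⟩ := my_subgrad _ hstrict hHpos
    have hgint : Integrable (fun q => μ (ℓ q) - μ H - p * (I (ℓ q) - I H)) ν :=
      (hint1.sub (integrable_const _)).sub ((hint2.sub (integrable_const _)).const_mul p)
    have hgnonneg : ∀ q, 0 ≤ μ (ℓ q) - μ H - p * (I (ℓ q) - I H) := by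
      intro q
      rcases eq_or_ne (ℓ q) H with he | hne2
      · rw [he]; ring_nf; exact le_refl _
      · have hk := my_key μ hpos hcont hlc hH (hℓnonneg q) hne2 hp
        rw [← hIdiff _ (hℓnonneg q)] at hk
        linarith
    have e1 : Integrable (fun q => μ (ℓ q) - μ H) ν := hint1.sub (integrable_const _)
    have e2 : Integrable (fun q => I (ℓ q) - I H) ν := hint2.sub (integrable_const _)
    have e3 : Integrable (fun q => p * (I (ℓ q) - I H)) ν := e2.const_mul p
    have hgzero : ∫ q, (μ (ℓ q) - μ H - p * (I (ℓ q) - I H)) ∂ν = 0 := by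
      rw [integral_sub e1 e3,
        integral_sub hint1 (integrable_const _), MeasureTheory.integral_const_mul p _,
        integral_sub hint2 (integrable_const _), MeasureTheory.integral_const, MeasureTheory.integral_const]
      simp only [probReal_univ, measure_univ, ENNReal.toReal_one, one_smul]
      rw [← heq, ← hHdef]; ring
    have hae : (fun q => μ (ℓ q) - μ H - p * (I (ℓ q) - I H)) =ᵐ[ν] 0 :=
      (integral_eq_zero_iff_of_nonneg hgnonneg hgint).1 hgzero
    filter_upwards [hae] with q hq
    by_contra hne2
    have hk := my_key μ hpos hcont hlc hH (hℓnonneg q) hne2 hp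
    rw [← hIdiff _ (hℓnonneg q)] at hk
    simp only [Pi.zero_apply] at hq
    linarith
end

section
/- Let f : ℝ → ℝ be positive, differentiable, and log-convex on [0,∞), with f nonconstant and unbounded on [0,∞). Define 𝓘(h) = f(h)ⁿ / ∫₀ʰ f(t)ⁿ dt for h > 0 and fixed n ≥ 1. Then lim_{h→∞} 𝓘(h) = lim_{h→∞} n·f'(h)/f(h), and this limit is positive (possibly +∞). -/
open Set MeasureTheory intervalIntegral Filter Topology

lemma aux_ratio_tendsto (C c : ℝ) (hc : 0 < c) :
    Tendsto (fun x : ℝ => x / (C + x / c)) atTop (𝓝 c) := by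
  have h1 : Tendsto (fun x : ℝ => C / x + 1 / c) atTop (𝓝 (0 + 1 / c)) :=
    (tendsto_const_nhds.div_atTop tendsto_id).add tendsto_const_nhds
  have h2 := h1.inv₀ (by positivity)
  have hden : Tendsto (fun x : ℝ => C + x / c) atTop atTop :=
    tendsto_atTop_add_const_left _ _ (tendsto_id.atTop_div_const hc)
  have heq : (fun x : ℝ => (C / x + 1 / c)⁻¹) =ᶠ[atTop] fun x => x / (C + x / c) := by
    filter_upwards [eventually_gt_atTop 0, hden.eventually_gt_atTop 0] with x hx hx2
    field_simp
  have := h2.congr' heq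
  simpa using this

/-- for positive, differentiable, log-convex, nonconstant,
unbounded `f`, the ratio `𝓘(h) = f(h)ⁿ / ∫₀ʰ fⁿ` and `n·f'/f` have the same
limit `L` as `h → ∞` (in `EReal`, since the limit may be `+∞`), and `L > 0`. -/
theorem stmt6 (f f' : ℝ → ℝ)
    (hpos : ∀ t ∈ Ici (0 : ℝ), 0 < f t)
    (hd : ∀ t ∈ Ici (0 : ℝ), HasDerivAt f (f' t) t)
    (hlc : ConvexOn ℝ (Ici 0) (fun t => Real.log (f t)))
    (hnc : ∃ a ∈ Ici (0 : ℝ), ∃ b ∈ Ici (0 : ℝ), f a ≠ f b)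
    (hub : ¬ BddAbove (f '' Ici 0))
    (n : ℕ) (hn : 1 ≤ n)
    (𝓘 : ℝ → ℝ) (h𝓘 : ∀ h, 𝓘 h = f h ^ n / ∫ t in (0:ℝ)..h, f t ^ n) :
    ∃ L : EReal, 0 < L ∧
      Tendsto (fun h => ((n * f' h / f h : ℝ) : EReal)) atTop (𝓝 L) ∧
      Tendsto (fun h => ((𝓘 h : ℝ) : EReal)) atTop (𝓝 L) := by
  have hcontAt : ∀ t ∈ Ici (0:ℝ), ContinuousAt f t := fun t ht => (hd t ht).continuousAt
  set F : ℝ → ℝ := fun t => f (t ⊔ 0) with hF_def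
  have hFf : ∀ t ∈ Ici (0:ℝ), F t = f t := fun t ht => by
    simp only [hF_def, sup_eq_left.2 (mem_Ici.1 ht)]
  have hFpos : ∀ t, 0 < F t := fun t => hpos _ (mem_Ici.2 le_sup_right)
  have hFcont : Continuous F := by
    rw [continuous_iff_continuousAt]
    intro t
    exact (hcontAt (t ⊔ 0) (mem_Ici.2 le_sup_right)).comp (f := fun b => b ⊔ 0) (x := t) ((continuous_id.max continuous_const).continuousAt)
  have hFn : Continuous (fun t => F t ^ n) := hFcont.pow n
  set I : ℝ → ℝ := fun h => ∫ t in (0:ℝ)..h, F t ^ n with hI_def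
  have hIderiv : ∀ h, HasDerivAt I (F h ^ n) h := fun h =>
    (hFn.integral_hasStrictDerivAt 0 h).hasDerivAt
  have hIcont : Continuous I := by
    rw [continuous_iff_continuousAt]; exact fun h => (hIderiv h).continuousAt
  have hI_eq : ∀ h : ℝ, 0 ≤ h → (∫ t in (0:ℝ)..h, f t ^ n) = I h := by
    intro h hh
    apply intervalIntegral.integral_congr
    intro t ht
    rw [uIcc_of_le hh] at ht
    simp only [hFf t ht.1]
  have hIpos : ∀ h : ℝ, 0 < h → 0 < I h := fun h hh =>
    intervalIntegral_pos_of_pos (hFn.intervalIntegrable 0 h) (fun t => pow_pos (hFpos t) n) hh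
  -- monotonicity of f'/f
  have hg_mono : MonotoneOn (fun t => f' t / f t) (Ici 0) := by
    intro x hx y hy hxy
    rcases eq_or_lt_of_le hxy with rfl | hlt
    · exact le_rfl
    have hdx : HasDerivAt (fun t => Real.log (f t)) (f' x / f x) x :=
      (hd x hx).log (hpos x hx).ne'
    have hdy : HasDerivAt (fun t => Real.log (f t)) (f' y / f y) y :=
      (hd y hy).log (hpos y hy).ne'
    exact (hlc.le_slope_of_hasDerivAt hx hy hlt hdx).trans
      (hlc.slope_le_of_hasDerivAt hx hy hlt hdy)
  set q : ℝ → ℝ := fun t => (n : ℝ) * (f' (t ⊔ 0) / f (t ⊔ 0)) with hq_def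
  have hq_mono : Monotone q := by
    intro a b hab
    exact mul_le_mul_of_nonneg_left
      (hg_mono (mem_Ici.2 le_sup_right) (mem_Ici.2 le_sup_right) (sup_le_sup_right hab 0)) (by positivity)
  have hq_eq : ∀ t : ℝ, 0 ≤ t → q t = (n : ℝ) * (f' t / f t) := fun t ht => by
    simp only [hq_def, sup_eq_left.2 ht]
  set L : EReal := ⨆ t : ℝ, ((q t : ℝ) : EReal) with hL_def
  have hq_tendsto : Tendsto (fun t => ((q t : ℝ) : EReal)) atTop (𝓝 L) :=
    tendsto_atTop_iSup (fun a b hab => EReal.coe_le_coe_iff.2 (hq_mono hab))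
  have hq_le : ∀ t, ((q t : ℝ) : EReal) ≤ L := fun t => le_iSup (fun t => ((q t : ℝ) : EReal)) t
  have horig : Tendsto (fun h => ((n * f' h / f h : ℝ) : EReal)) atTop (𝓝 L) := by
    apply hq_tendsto.congr'
    filter_upwards [eventually_ge_atTop (0:ℝ)] with h hh
    rw [hq_eq h hh, mul_div_assoc]
  -- L is positive
  have hL_pos : 0 < L := by
    by_contra hle
    push_neg at hle
    have hf'le : ∀ t ∈ Ici (0:ℝ), f' t ≤ 0 := by
      intro t ht
      have h1 : ((q t : ℝ) : EReal) ≤ ((0:ℝ) : EReal) := by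
        refine (hq_le t).trans ?_
        simpa using hle
      have hq0 : q t ≤ 0 := EReal.coe_le_coe_iff.1 h1
      rw [hq_eq t ht] at hq0
      have hnpos : (0:ℝ) < (n:ℝ) := by positivity
      have hdiv : f' t / f t ≤ 0 := nonpos_of_mul_nonpos_right ?_ hnpos
      · have := hpos t ht
        by_contra hgt
        push_neg at hgt
        have : 0 < f' t / f t := div_pos hgt (hpos t ht)
        linarith
      · linarith [hq0]
    have hanti : AntitoneOn f (Ici 0) := by
      apply antitoneOn_of_deriv_nonpos (convex_Ici 0)
      · exact fun t ht => (hcontAt t ht).continuousWithinAt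
      · intro t ht
        rw [interior_Ici] at ht
        exact ((hd t (mem_Ici.2 (le_of_lt ht))).differentiableAt).differentiableWithinAt
      · intro t ht
        rw [interior_Ici] at ht
        rw [(hd t (mem_Ici.2 ht.le)).deriv]
        exact hf'le t (mem_Ici.2 ht.le)
    exact hub ⟨f 0, fun y hy => by
      obtain ⟨t, ht, rfl⟩ := hy
      exact hanti (mem_Ici.2 le_rfl) ht ht⟩
  -- a point with positive slope
  have hex : ∃ t₀ : ℝ, 0 < q t₀ := by
    by_contra hno
    push_neg at hno
    have : L ≤ ((0:ℝ) : EReal) := iSup_le fun t => EReal.coe_le_coe_iff.2 (hno t)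
    simp only [EReal.coe_zero] at this
    exact absurd this (not_le.2 hL_pos)
  obtain ⟨t₀, ht₀⟩ := hex
  set t₂ : ℝ := (t₀ ⊔ 0) ⊔ 1 with ht₂_def
  have ht₂0 : (0:ℝ) < t₂ := lt_of_lt_of_le one_pos le_sup_right
  have ht₂q : 0 < q t₂ := lt_of_lt_of_le ht₀ (hq_mono (le_sup_left.trans le_sup_left))
  have ht₂g : 0 < f' t₂ / f t₂ := by
    rw [hq_eq t₂ ht₂0.le] at ht₂q
    have hnpos : (0:ℝ) < (n:ℝ) := by positivity
    nlinarith [ht₂q]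
  set c : ℝ := f' t₂ / f t₂ with hc_def
  have hgc : ∀ t : ℝ, t₂ ≤ t → c ≤ f' t / f t := fun t ht =>
    hg_mono ht₂0.le (ht₂0.le.trans ht) ht
  -- growth of log f
  have hu_mono : MonotoneOn (fun t => Real.log (f t) - c * t) (Ici t₂) := by
    apply monotoneOn_of_hasDerivWithinAt_nonneg (convex_Ici t₂)
      (f' := fun t => f' t / f t - c)
    · intro t ht
      have ht0 : (0:ℝ) ≤ t := ht₂0.le.trans ht
      exact (((hcontAt t ht0).log (hpos t ht0).ne').sub
        (continuous_const.mul continuous_id).continuousAt).continuousWithinAt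
    · intro t ht
      rw [interior_Ici] at ht
      have ht0 : (0:ℝ) ≤ t := (ht₂0.trans ht).le
      have h1 : HasDerivAt (fun t => Real.log (f t) - c * t) (f' t / f t - c) t := by
        have := ((hd t ht0).log (hpos t ht0).ne').sub ((hasDerivAt_id t).const_mul c)
        simp at this
        exact this
      exact h1.hasDerivWithinAt
    · intro t ht
      rw [interior_Ici] at ht
      exact sub_nonneg.2 (hgc t ht.le)
  have hlog : ∀ t : ℝ, t₂ ≤ t → Real.log (f t₂) + c * (t - t₂) ≤ Real.log (f t) := by
    intro t ht
    have := hu_mono (self_mem_Ici) ht ht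
    simp only at this
    linarith
  have hf_ge : ∀ t : ℝ, t₂ ≤ t → f t₂ ≤ f t := by
    intro t ht
    have h1 := hlog t ht
    have h2 : Real.log (f t₂) ≤ Real.log (f t) := by nlinarith [mul_nonneg ht₂g.le (sub_nonneg.2 ht)]
    have := Real.exp_le_exp.2 h2
    rwa [Real.exp_log (hpos t₂ ht₂0.le), Real.exp_log (hpos t (ht₂0.le.trans ht))] at this
  have hftend : Tendsto f atTop atTop := by
    have hlin : Tendsto (fun t : ℝ => Real.log (f t₂) + c * (t - t₂)) atTop atTop := by
      apply tendsto_atTop_add_const_left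
      exact (tendsto_atTop_add_const_right _ _ tendsto_id).const_mul_atTop ht₂g
    have hexp : Tendsto (fun t : ℝ => Real.exp (Real.log (f t₂) + c * (t - t₂))) atTop atTop :=
      Real.tendsto_exp_atTop.comp hlin
    apply tendsto_atTop_mono' atTop ?_ hexp
    filter_upwards [eventually_ge_atTop t₂] with t ht
    calc Real.exp (Real.log (f t₂) + c * (t - t₂)) ≤ Real.exp (Real.log (f t)) :=
          Real.exp_le_exp.2 (hlog t ht)
      _ = f t := Real.exp_log (hpos t (ht₂0.le.trans ht))
  have hFn_tend : Tendsto (fun h => F h ^ n) atTop atTop := by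
    apply ((tendsto_pow_atTop (Nat.one_le_iff_ne_zero.1 hn)).comp hftend).congr'
    filter_upwards [eventually_ge_atTop (0:ℝ)] with h hh
    rw [Function.comp_apply, hFf h hh]
  -- I tends to infinity
  have hI_tend : Tendsto I atTop atTop := by
    have key : ∀ h : ℝ, t₂ ≤ h → (h - t₂) * f t₂ ^ n + I t₂ ≤ I h := by
      intro h hh
      have hadd : I t₂ + ∫ t in t₂..h, F t ^ n = I h :=
        integral_add_adjacent_intervals (hFn.intervalIntegrable 0 t₂) (hFn.intervalIntegrable t₂ h)
      have hmono : (h - t₂) * f t₂ ^ n ≤ ∫ t in t₂..h, F t ^ n := by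
        have h1 : ∫ t in t₂..h, f t₂ ^ n ≤ ∫ t in t₂..h, F t ^ n := by
          apply intervalIntegral.integral_mono_on hh
            (intervalIntegrable_const) (hFn.intervalIntegrable t₂ h)
          intro x hx
          rw [hFf x ((ht₂0.le.trans hx.1))]
          exact pow_le_pow_left₀ (hpos t₂ ht₂0.le).le (hf_ge x hx.1) n
        rwa [intervalIntegral.integral_const, smul_eq_mul] at h1
      linarith
    apply tendsto_atTop_mono' atTop ?_ ?_
    · exact fun h => (h - t₂) * f t₂ ^ n + I t₂
    · filter_upwards [eventually_ge_atTop t₂] with h hh using key h hh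
    · apply tendsto_atTop_add_const_right
      exact (tendsto_atTop_add_const_right _ _ tendsto_id).atTop_mul_const
        (pow_pos (hpos t₂ ht₂0.le) n)
  -- derivative of h ↦ F h ^ n - c * I h
  have hφderiv : ∀ (a : ℝ) (h : ℝ), 0 < h →
      HasDerivAt (fun x => F x ^ n - a * I x)
        (F h ^ n * ((n : ℝ) * (f' h / f h) - a)) h := by
    intro a h hh
    have hFd : HasDerivAt F (f' h) h := by
      have hev : F =ᶠ[𝓝 h] f := by
        filter_upwards [eventually_gt_nhds hh] with x hx
        simp only [hF_def, sup_eq_left.2 hx.le]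
      exact (hd h hh.le).congr_of_eventuallyEq hev
    have h1 : HasDerivAt (fun x => F x ^ n) ((n : ℝ) * F h ^ (n - 1) * f' h) h := hFd.pow n
    have h2 := (hIderiv h).const_mul a
    have h3 := h1.sub h2
    refine h3.congr_deriv ?_
    symm
    have hfh : f h = F h := (hFf h hh.le).symm
    have hFh : (0:ℝ) < F h := hFpos h
    have hpow : F h ^ n = F h ^ (n - 1) * F h := by
      rw [← pow_succ]
      congr 1
      omega
    rw [hfh]
    field_simp
    rw [hpow]
    ring
  have hφcont : ∀ a : ℝ, Continuous (fun x => F x ^ n - a * I x) :=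
    fun a => hFn.sub (continuous_const.mul hIcont)
  -- monotone key
  have hmono_key : ∀ (a s : ℝ), 0 ≤ s → (∀ t, s ≤ t → a ≤ (n : ℝ) * (f' t / f t)) →
      MonotoneOn (fun h => F h ^ n - a * I h) (Ici s) := by
    intro a s hs ha
    apply monotoneOn_of_hasDerivWithinAt_nonneg (convex_Ici s) ((hφcont a).continuousOn)
      (f' := fun h => F h ^ n * ((n : ℝ) * (f' h / f h) - a))
    · intro h hh
      rw [interior_Ici] at hh
      exact (hφderiv a h (lt_of_le_of_lt hs hh)).hasDerivWithinAt
    · intro h hh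
      rw [interior_Ici] at hh
      exact mul_nonneg (pow_pos (hFpos h) n).le (sub_nonneg.2 (ha h hh.le))
  have hanti_key : ∀ a : ℝ, (∀ t, 0 ≤ t → (n : ℝ) * (f' t / f t) ≤ a) →
      AntitoneOn (fun h => F h ^ n - a * I h) (Ici 0) := by
    intro a ha
    apply antitoneOn_of_hasDerivWithinAt_nonpos (convex_Ici 0) ((hφcont a).continuousOn)
      (f' := fun h => F h ^ n * ((n : ℝ) * (f' h / f h) - a))
    · intro h hh
      rw [interior_Ici] at hh
      exact (hφderiv a h hh).hasDerivWithinAt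
    · intro h hh
      rw [interior_Ici] at hh
      exact mul_nonpos_of_nonneg_of_nonpos (pow_pos (hFpos h) n).le
        (sub_nonpos.2 (ha h hh.le))
  -- 𝓘 in terms of F and I
  have h𝓘F : ∀ h : ℝ, 0 < h → 𝓘 h = F h ^ n / I h := by
    intro h hh
    rw [h𝓘 h, hI_eq h hh.le, hFf h hh.le]
  -- lower bound machinery
  have hlowbd : ∀ a : ℝ, 0 < a → ((a : ℝ) : EReal) < L →
      ∃ C₀ : ℝ, 0 ≤ C₀ ∧ ∀ᶠ h in atTop, F h ^ n / (C₀ + F h ^ n / a) ≤ 𝓘 h := by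
    intro a ha haL
    rw [hL_def, lt_iSup_iff] at haL
    obtain ⟨t, hta⟩ := haL
    have hta' : a < q t := EReal.coe_lt_coe_iff.1 hta
    set s : ℝ := t ⊔ 0 with hs_def
    have hs0 : (0:ℝ) ≤ s := le_sup_right
    have hqs : a < q s := lt_of_lt_of_le hta' (hq_mono le_sup_left)
    have hge : ∀ u, s ≤ u → a ≤ (n : ℝ) * (f' u / f u) := by
      intro u hu
      rw [← hq_eq u (hs0.trans hu)]
      exact (le_of_lt hqs).trans (hq_mono hu)
    have hmono := hmono_key a s hs0 hge
    refine ⟨I s, ?_, ?_⟩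
    · rcases eq_or_lt_of_le hs0 with heq | hlt
      · simp [hI_def, ← heq]
      · exact (hIpos s hlt).le
    filter_upwards [eventually_gt_atTop (s ⊔ 0)] with h hh
    have hhs : s ≤ h := le_of_lt (lt_of_le_of_lt le_sup_left hh)
    have hh0 : (0:ℝ) < h := lt_of_le_of_lt le_sup_right hh
    have hkey := hmono (self_mem_Ici) (mem_Ici.2 hhs) hhs
    simp only at hkey
    -- F s ^ n - a * I s ≤ F h ^ n - a * I h  gives  I h ≤ I s + F h ^ n / a
    have hIh_le : I h ≤ I s + F h ^ n / a := by
      have hFs : (0:ℝ) < F s ^ n := pow_pos (hFpos s) n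
      have h3 : a * I h ≤ a * (I s + F h ^ n / a) := by
        have he : a * (I s + F h ^ n / a) = a * I s + F h ^ n := by
          field_simp
        rw [he]
        linarith
      exact le_of_mul_le_mul_left h3 ha
    rw [h𝓘F h hh0]
    exact div_le_div_of_nonneg_left (pow_pos (hFpos h) n).le (hIpos h hh0) hIh_le
  -- final assembly
  refine ⟨L, hL_pos, horig, ?_⟩
  rw [tendsto_order]
  constructor
  · intro b hb
    have hb0 : b ⊔ 0 < L := sup_lt_iff.2 ⟨hb, hL_pos⟩
    obtain ⟨c₁, hc₁l, hc₁r⟩ := EReal.exists_between_coe_real hb0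
    obtain ⟨c₂, hc₂l, hc₂r⟩ := EReal.exists_between_coe_real hc₁r
    have hc₁pos : (0:ℝ) < c₁ := by
      have h0 : ((0:ℝ):EReal) < (c₁:EReal) := by
        refine lt_of_le_of_lt ?_ hc₁l
        simp
      exact_mod_cast h0
    have hc₂pos : 0 < c₂ := lt_trans hc₁pos (EReal.coe_lt_coe_iff.1 hc₂l)
    obtain ⟨C₀, hC₀, hev⟩ := hlowbd c₂ hc₂pos hc₂r
    have htc : Tendsto (fun h => F h ^ n / (C₀ + F h ^ n / c₂)) atTop (𝓝 c₂) := by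
      have := (aux_ratio_tendsto C₀ c₂ hc₂pos).comp hFn_tend
      exact this
    have hc₁c₂ : c₁ < c₂ := EReal.coe_lt_coe_iff.1 hc₂l
    have hev2 : ∀ᶠ h in atTop, c₁ < F h ^ n / (C₀ + F h ^ n / c₂) :=
      htc.eventually (eventually_gt_nhds hc₁c₂)
    filter_upwards [hev, hev2] with h h1 h2
    have h3 : c₁ < 𝓘 h := lt_of_lt_of_le h2 h1
    calc b ≤ b ⊔ 0 := le_sup_left
      _ < (c₁ : EReal) := hc₁l
      _ < ((𝓘 h : ℝ) : EReal) := EReal.coe_lt_coe_iff.2 h3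
  · intro b hb
    have hLtop : L ≠ ⊤ := (lt_of_lt_of_le hb le_top).ne
    have hLbot : L ≠ ⊥ := (lt_of_le_of_lt bot_le hL_pos).ne'
    set Lr : ℝ := L.toReal with hLr_def
    have hLr : L = ((Lr : ℝ) : EReal) := (EReal.coe_toReal hLtop hLbot).symm
    have hqle : ∀ t : ℝ, 0 ≤ t → (n : ℝ) * (f' t / f t) ≤ Lr := by
      intro t ht
      have h1 := hq_le t
      rw [hLr] at h1
      have h2 : q t ≤ Lr := EReal.coe_le_coe_iff.1 h1
      rwa [hq_eq t ht] at h2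
    have hanti := hanti_key Lr hqle
    have hupper : ∀ᶠ h in atTop, 𝓘 h ≤ Lr + F 0 ^ n / I h := by
      filter_upwards [eventually_gt_atTop (0:ℝ)] with h hh
      have hk := hanti (self_mem_Ici) (mem_Ici.2 hh.le) hh.le
      simp only at hk
      have hI0 : I 0 = 0 := by simp [hI_def]
      rw [hI0, mul_zero, sub_zero] at hk
      rw [h𝓘F h hh, div_le_iff₀ (hIpos h hh)]
      have he2 : (Lr + F 0 ^ n / I h) * I h = Lr * I h + F 0 ^ n := by
        field_simp [(hIpos h hh).ne']
      rw [he2]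
      linarith
    have hconv : Tendsto (fun h => Lr + F 0 ^ n / I h) atTop (𝓝 (Lr + 0)) :=
      tendsto_const_nhds.add (tendsto_const_nhds.div_atTop hI_tend)
    rw [add_zero] at hconv
    rw [hLr] at hb
    obtain ⟨b', hb'l, hb'r⟩ := EReal.exists_between_coe_real hb
    have hb'' : Lr < b' := EReal.coe_lt_coe_iff.1 hb'l
    have hev3 : ∀ᶠ h in atTop, Lr + F 0 ^ n / I h < b' :=
      hconv.eventually (eventually_lt_nhds hb'')
    filter_upwards [hupper, hev3] with h h1 h2
    calc ((𝓘 h : ℝ) : EReal) < (b' : EReal) := EReal.coe_lt_coe_iff.2 (lt_of_le_of_lt h1 h2)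
      _ < b := hb'r
end

section
/- Let f be positive, differentiable, log-convex, and unbounded on [0,∞). Then 𝓘(h) = f(h)ⁿ / ∫₀ʰ f(t)ⁿ dt satisfies inf_{h>0} 𝓘(h) > 0. -/
open Set MeasureTheory intervalIntegral

/-- for positive, differentiable, log-convex, unbounded `f`,
the isoperimetric ratio `𝓘(h) = f(h)ⁿ / ∫₀ʰ fⁿ` is bounded below by a
positive constant on `(0,∞)`. -/
theorem stmt7 (f : ℝ → ℝ)
    (hpos : ∀ t ∈ Ici (0 : ℝ), 0 < f t)
    (hd : ∀ t ∈ Ici (0 : ℝ), DifferentiableAt ℝ f t)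
    (hlc : ConvexOn ℝ (Ici 0) (fun t => Real.log (f t)))
    (hub : ¬ BddAbove (f '' Ici 0))
    (n : ℕ) (hn : 1 ≤ n) :
    ∃ ω > (0 : ℝ), ∀ h > (0 : ℝ),
      ω ≤ f h ^ n / ∫ t in (0:ℝ)..h, f t ^ n := by
  set g : ℝ → ℝ := fun t => Real.log (f t) with hg
  -- continuity of f on Ici 0
  have hfc : ContinuousOn f (Ici 0) := fun t ht => (hd t ht).continuousAt.continuousWithinAt
  have hfcn : ContinuousOn (fun t => f t ^ n) (Ici 0) := hfc.pow n
  -- find b > 0 with f 0 < f b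
  obtain ⟨y, ⟨b, hb0, rfl⟩, hfb⟩ := not_bddAbove_iff.mp hub (f 0)
  have hb0 : (0:ℝ) ≤ b := hb0
  have hbpos : 0 < b := hb0.lt_of_ne (by rintro rfl; exact lt_irrefl _ hfb)
  have hf0 : 0 < f 0 := hpos 0 self_mem_Ici
  have hfbpos : 0 < f b := hpos b hb0
  have hgb : g 0 < g b := Real.log_lt_log hf0 hfb
  set s : ℝ := (g b - g 0) / (b - 0) with hs
  have hspos : 0 < s := div_pos (by linarith) (by linarith)
  set c : ℝ := (n : ℝ) * s with hc
  have hnpos : (0:ℝ) < (n:ℝ) := by exact_mod_cast hn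
  have hcpos : 0 < c := mul_pos hnpos hspos
  -- slope inequality : for b ≤ t < h, s * (h - t) ≤ g h - g t
  have hslope : ∀ t h : ℝ, b ≤ t → t < h → s * (h - t) ≤ g h - g t := by
    intro t h hbt hth
    have h0t : (0:ℝ) ≤ t := hb0.trans hbt
    have hhpos : 0 < h := lt_of_le_of_lt h0t hth
    have step1 : (g b - g 0) / (b - 0) ≤ (g h - g 0) / (h - 0) :=
      hlc.secant_mono self_mem_Ici hb0 hhpos.le hbpos.ne' hhpos.ne' (by linarith)
    have step2 : (g 0 - g h) / (0 - h) ≤ (g t - g h) / (t - h) :=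
      hlc.secant_mono hhpos.le self_mem_Ici h0t hhpos.ne hth.ne h0t
    have e1 : (g 0 - g h) / (0 - h) = (g h - g 0) / (h - 0) := by
      rw [show (0:ℝ) - h = -(h - 0) by ring, show g 0 - g h = -(g h - g 0) by ring,
        neg_div_neg_eq]
    have e2 : (g t - g h) / (t - h) = (g h - g t) / (h - t) := by
      rw [show t - h = -(h - t) by ring, show g t - g h = -(g h - g t) by ring,
        neg_div_neg_eq]
    have : s ≤ (g h - g t) / (h - t) := by
      rw [hs]; rw [e1] at step2; rw [e2] at step2; linarith
    have hht : 0 < h - t := by linarith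
    calc s * (h - t) ≤ ((g h - g t) / (h - t)) * (h - t) :=
          mul_le_mul_of_nonneg_right this hht.le
      _ = g h - g t := by field_simp
  -- f is at least f b beyond b
  have hfge : ∀ h : ℝ, b < h → f b ≤ f h := by
    intro h hbh
    have := hslope b h le_rfl hbh
    have hgh : g b ≤ g h := by nlinarith
    have := Real.exp_le_exp.mpr hgh
    rwa [hg, Real.exp_log hfbpos, Real.exp_log (hpos h (hb0.trans hbh.le))] at this
  -- min and max of f on [0, b]
  obtain ⟨tm, htm, hmin⟩ := isCompact_Icc.exists_isMinOn (nonempty_Icc.mpr hb0)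
    (hfc.mono (Icc_subset_Ici_self))
  obtain ⟨tM, htM, hmax⟩ := isCompact_Icc.exists_isMaxOn (nonempty_Icc.mpr hb0)
    (hfc.mono (Icc_subset_Ici_self))
  set m : ℝ := f tm with hm
  set M : ℝ := f tM with hM
  have hmpos : 0 < m := hpos tm htm.1
  have hMpos : 0 < M := hpos tM htM.1
  -- lower bound on f h for all h > 0
  have hflb : ∀ h : ℝ, 0 < h → m ≤ f h := by
    intro h hh
    rcases le_or_gt h b with hhb | hhb
    · exact hmin ⟨hh.le, hhb⟩
    · exact le_trans (hmin ⟨hb0, le_rfl⟩) (hfge h hhb)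
  -- integrability
  have hint : ∀ x y : ℝ, 0 ≤ x → x ≤ y → IntervalIntegrable (fun t => f t ^ n) volume x y := by
    intro x y hx hxy
    apply ContinuousOn.intervalIntegrable
    apply hfcn.mono
    rw [uIcc_of_le hxy]
    exact fun z hz => hx.trans hz.1
  set K : ℝ := b * M ^ n with hK
  have hKpos : 0 < K := mul_pos hbpos (pow_pos hMpos n)
  -- bound for first segment
  have hseg1 : ∀ x : ℝ, 0 ≤ x → x ≤ b → (∫ t in (0:ℝ)..x, f t ^ n) ≤ K := by
    intro x hx hxb
    have h1 : (∫ t in (0:ℝ)..x, f t ^ n) ≤ ∫ t in (0:ℝ)..x, M ^ n := by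
      apply integral_mono_on hx (hint 0 x le_rfl hx) intervalIntegrable_const
      intro t ht
      exact pow_le_pow_left₀ (hpos t ht.1).le (hmax ⟨ht.1, ht.2.trans hxb⟩) n
    rw [intervalIntegral.integral_const, smul_eq_mul, sub_zero] at h1
    calc (∫ t in (0:ℝ)..x, f t ^ n) ≤ x * M ^ n := h1
      _ ≤ K := by rw [hK]; exact mul_le_mul_of_nonneg_right hxb (pow_pos hMpos n).le
  -- bound for second segment
  have hseg2 : ∀ h : ℝ, b < h → (∫ t in b..h, f t ^ n) ≤ f h ^ n / c := by
    intro h hbh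
    have hhpos : 0 < h := hbpos.trans hbh
    have hfh : 0 < f h := hpos h hhpos.le
    -- pointwise bound
    have hpt : ∀ t ∈ Icc b h, f t ^ n ≤ f h ^ n * Real.exp (c * (t - h)) := by
      intro t ht
      rcases eq_or_lt_of_le ht.2 with rfl | hth
      · simp
      · have hsl := hslope t h ht.1 hth
        have hft : 0 < f t := hpos t ((hb0.trans ht.1))
        have hkey : (n:ℝ) * g t ≤ (n:ℝ) * g h + c * (t - h) := by
          rw [hc]; nlinarith
        calc f t ^ n = Real.exp (g t) ^ n := by rw [hg, Real.exp_log hft]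
          _ = Real.exp ((n:ℝ) * g t) := (Real.exp_nat_mul _ n).symm
          _ ≤ Real.exp ((n:ℝ) * g h + c * (t - h)) := Real.exp_le_exp.mpr hkey
          _ = Real.exp (g h) ^ n * Real.exp (c * (t - h)) := by
              rw [Real.exp_add, Real.exp_nat_mul]
          _ = f h ^ n * Real.exp (c * (t - h)) := by rw [hg, Real.exp_log hfh]
    -- integral of exponential
    have hexp : (∫ t in b..h, Real.exp (c * (t - h))) = c⁻¹ * (1 - Real.exp (c * (b - h))) := by
      rw [intervalIntegral.integral_comp_sub_right (fun t => Real.exp (c * t)) h]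
      rw [intervalIntegral.integral_comp_mul_left Real.exp hcpos.ne']
      rw [integral_exp]
      simp [sub_self, Real.exp_zero, smul_eq_mul]
    have hmaj : IntervalIntegrable (fun t => f h ^ n * Real.exp (c * (t - h))) volume b h := by
      apply Continuous.intervalIntegrable
      continuity
    have h2 : (∫ t in b..h, f t ^ n) ≤ ∫ t in b..h, f h ^ n * Real.exp (c * (t - h)) :=
      integral_mono_on hbh.le (hint b h hb0 hbh.le) hmaj hpt
    have h3 : (∫ t in b..h, f h ^ n * Real.exp (c * (t - h)))
        = f h ^ n * (c⁻¹ * (1 - Real.exp (c * (b - h)))) := by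
      rw [intervalIntegral.integral_const_mul, hexp]
    have h4 : f h ^ n * (c⁻¹ * (1 - Real.exp (c * (b - h)))) ≤ f h ^ n / c := by
      rw [div_eq_mul_inv]
      have hexple : 1 - Real.exp (c * (b - h)) ≤ 1 := by
        have := Real.exp_pos (c * (b - h)); linarith
      have h5 : c⁻¹ * (1 - Real.exp (c * (b - h))) ≤ c⁻¹ := by
        calc c⁻¹ * (1 - Real.exp (c * (b - h))) ≤ c⁻¹ * 1 :=
              mul_le_mul_of_nonneg_left hexple (inv_pos.mpr hcpos).le
          _ = c⁻¹ := mul_one _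
      exact mul_le_mul_of_nonneg_left h5 (pow_pos hfh n).le
    linarith
  -- global bound on the integral
  have hmain : ∀ h : ℝ, 0 < h → (∫ t in (0:ℝ)..h, f t ^ n) ≤ K + f h ^ n / c := by
    intro h hh
    have hfh : 0 < f h := hpos h hh.le
    rcases le_or_gt h b with hhb | hhb
    · have := hseg1 h hh.le hhb
      have : (0:ℝ) ≤ f h ^ n / c := by positivity
      linarith [hseg1 h hh.le hhb]
    · have hsplit : (∫ t in (0:ℝ)..b, f t ^ n) + (∫ t in b..h, f t ^ n)
          = ∫ t in (0:ℝ)..h, f t ^ n :=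
        intervalIntegral.integral_add_adjacent_intervals (hint 0 b le_rfl hb0)
          (hint b h hb0 hhb.le)
      have := hseg1 b hb0 le_rfl
      have := hseg2 h hhb
      linarith
  -- conclusion
  refine ⟨m ^ n / (K + m ^ n / c), by positivity, ?_⟩
  intro h hh
  have hfh : 0 < f h := hpos h hh.le
  have hY : 0 < ∫ t in (0:ℝ)..h, f t ^ n := by
    apply intervalIntegral_pos_of_pos_on (hint 0 h le_rfl hh.le)
    · intro x hx; exact pow_pos (hpos x hx.1.le) n
    · exact hh
  rw [le_div_iff₀ hY]
  have hX : m ^ n ≤ f h ^ n := pow_le_pow_left₀ hmpos.le (hflb h hh) n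
  have hωnn : (0:ℝ) ≤ m ^ n / (K + m ^ n / c) := by positivity
  have step : m ^ n / (K + m ^ n / c) * (∫ t in (0:ℝ)..h, f t ^ n)
      ≤ m ^ n / (K + m ^ n / c) * (K + f h ^ n / c) :=
    mul_le_mul_of_nonneg_left (hmain h hh) hωnn
  have hden : 0 < K + m ^ n / c := by positivity
  have final : m ^ n / (K + m ^ n / c) * (K + f h ^ n / c) ≤ f h ^ n := by
    rw [div_mul_eq_mul_div, div_le_iff₀ hden]
    have e : m ^ n * (f h ^ n / c) = f h ^ n * (m ^ n / c) := by ring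
    have hKle : m ^ n * K ≤ f h ^ n * K := mul_le_mul_of_nonneg_right hX hKpos.le
    rw [mul_add, mul_add]
    linarith
  linarith
end

section
/- Let f be positive, differentiable on [0,∞). If f is bounded on [0,∞), then inf_{h>0} f(h)ⁿ / ∫₀ʰ f(t)ⁿ dt = 0, i.e. the function 𝓘 is not bounded below by any positive constant. -/
open Set MeasureTheory intervalIntegral

/-- if `f` is positive, differentiable, and bounded on `[0,∞)`,
then the infimum over `h > 0` of `𝓘(h) = f(h)ⁿ / ∫₀ʰ fⁿ` is `0`: no positive
lower bound exists. -/
theorem stmt8 (f : ℝ → ℝ)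
    (hpos : ∀ t ∈ Ici (0 : ℝ), 0 < f t)
    (hd : ∀ t ∈ Ici (0 : ℝ), DifferentiableAt ℝ f t)
    (hbd : BddAbove (f '' Ici 0))
    (n : ℕ) (hn : 1 ≤ n) :
    ∀ ε > (0 : ℝ), ∃ h > (0 : ℝ),
      f h ^ n / (∫ t in (0:ℝ)..h, f t ^ n) < ε := by
  intro ε hε
  by_contra hcon
  push_neg at hcon
  obtain ⟨M, hM⟩ := hbd
  have hM' : ∀ x ∈ Ici (0:ℝ), f x ≤ M := fun x hx => hM ⟨x, hx, rfl⟩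
  have hc : ContinuousOn f (Ici 0) :=
    fun t ht => (hd t ht).continuousAt.continuousWithinAt
  have hint : ∀ a b : ℝ, 0 ≤ a → a ≤ b →
      IntervalIntegrable (fun t => f t ^ n) volume a b := by
    intro a b ha hab
    apply ContinuousOn.intervalIntegrable
    apply ContinuousOn.pow
    apply hc.mono
    rw [uIcc_of_le hab]
    intro x hx
    exact le_trans ha hx.1
  set F : ℝ → ℝ := fun h => ∫ t in (0:ℝ)..h, f t ^ n with hF
  have hFpos : ∀ h, 0 < h → 0 < F h := by
    intro h hh
    apply intervalIntegral.intervalIntegral_pos_of_pos_on (hint 0 h le_rfl hh.le)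
    · intro x hx
      exact pow_pos (hpos x (le_of_lt hx.1)) n
    · exact hh
  have key : ∀ h, 0 < h → ε * F h ≤ f h ^ n := by
    intro h hh
    have h1 := hcon h hh
    rw [le_div_iff₀ (hFpos h hh)] at h1
    linarith
  have hFmono : ∀ a b : ℝ, 0 < a → a ≤ b → F a ≤ F b := by
    intro a b ha hab
    have hadd : (∫ t in (0:ℝ)..a, f t ^ n) + (∫ t in a..b, f t ^ n)
        = ∫ t in (0:ℝ)..b, f t ^ n :=
      intervalIntegral.integral_add_adjacent_intervals
        (hint 0 a le_rfl ha.le) (hint a b ha.le hab)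
    have hnn : 0 ≤ ∫ t in a..b, f t ^ n :=
      intervalIntegral.integral_nonneg hab
        (fun x hx => pow_nonneg (hpos x (le_trans ha.le hx.1)).le n)
    simp only [hF]
    linarith
  have hF1 : 0 < F 1 := hFpos 1 one_pos
  -- growth estimate: for h ≥ 1, F h ≥ F 1 + ε * F 1 * (h - 1)
  have hgrow : ∀ h : ℝ, 1 ≤ h → F 1 + ε * F 1 * (h - 1) ≤ F h := by
    intro h hh
    have hadd : (∫ t in (0:ℝ)..1, f t ^ n) + (∫ t in (1:ℝ)..h, f t ^ n)
        = ∫ t in (0:ℝ)..h, f t ^ n :=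
      intervalIntegral.integral_add_adjacent_intervals
        (hint 0 1 le_rfl one_pos.le) (hint 1 h one_pos.le hh)
    have hlow : ∫ t in (1:ℝ)..h, (ε * F 1) ≤ ∫ t in (1:ℝ)..h, f t ^ n := by
      apply intervalIntegral.integral_mono_on hh intervalIntegrable_const
        (hint 1 h one_pos.le hh)
      intro x hx
      calc ε * F 1 ≤ ε * F x := by
            have := hFmono 1 x one_pos hx.1
            nlinarith
        _ ≤ f x ^ n := key x (lt_of_lt_of_le one_pos hx.1)
    have hconst : ∫ t in (1:ℝ)..h, (ε * F 1) = (h - 1) * (ε * F 1) := by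
      simp [intervalIntegral.integral_const, smul_eq_mul]
      ring
    simp only [hF]
    nlinarith
  -- choose h large
  set h : ℝ := 1 + M ^ n / (ε ^ 2 * F 1) with hh_def
  have hMpos : 0 < M := lt_of_lt_of_le (hpos 0 self_mem_Ici) (hM' 0 self_mem_Ici)
  have hMn : 0 < M ^ n := pow_pos hMpos n
  have hden : 0 < ε ^ 2 * F 1 := by positivity
  have hh1 : 1 ≤ h := by
    have h0 : 0 ≤ M ^ n / (ε ^ 2 * F 1) := le_of_lt (div_pos hMn hden)
    rw [hh_def]
    linarith
  have hhpos : 0 < h := lt_of_lt_of_le one_pos hh1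
  have hFh : F 1 + ε * F 1 * (h - 1) ≤ F h := hgrow h hh1
  have hterm : ε * F 1 * (h - 1) = M ^ n / ε := by
    have : h - 1 = M ^ n / (ε ^ 2 * F 1) := by simp [hh_def]
    rw [this]
    field_simp
  have hfh : f h ^ n ≤ M ^ n :=
    pow_le_pow_left₀ (hpos h hhpos.le).le (hM' h hhpos.le) n
  have hkey := key h hhpos
  have : ε * F h ≥ ε * (F 1 + M ^ n / ε) := by
    rw [hterm] at hFh
    nlinarith
  have hexp : ε * (F 1 + M ^ n / ε) = ε * F 1 + M ^ n := by
    field_simp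
  nlinarith
end

section
/- Let f : [0,∞) → (0,∞) be differentiable with f'/f nondecreasing, and 𝓘(h) = f(h)ⁿ/∫₀ʰ fⁿ. If h₁ < h₂ are two critical points of 𝓘, then 𝓘(h₁) ≤ 𝓘(h₂); in particular the critical values of 𝓘 are nondecreasing in h, and any local minimum value of 𝓘 occurs at the smallest positive critical point. -/
open Set MeasureTheory intervalIntegral

/-- critical values of `𝓘(h) = f(h)ⁿ / ∫₀ʰ fⁿ` are nondecreasing:
if `0 < h₁ < h₂` are critical points then `𝓘(h₁) ≤ 𝓘(h₂)`. -/
theorem stmt10 (f f' : ℝ → ℝ)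
    (hpos : ∀ t ∈ Ici (0 : ℝ), 0 < f t)
    (hd : ∀ t ∈ Ici (0 : ℝ), HasDerivAt f (f' t) t)
    (hmono : MonotoneOn (fun t => f' t / f t) (Ici 0))
    (n : ℕ) (hn : 1 ≤ n)
    (𝓘 : ℝ → ℝ) (h𝓘 : ∀ h, 𝓘 h = f h ^ n / ∫ t in (0:ℝ)..h, f t ^ n)
    (h₁ h₂ : ℝ) (hh₁ : 0 < h₁) (hlt : h₁ < h₂)
    (hcrit₁ : HasDerivAt 𝓘 0 h₁) (hcrit₂ : HasDerivAt 𝓘 0 h₂) :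
    𝓘 h₁ ≤ 𝓘 h₂ := by
  set g : ℝ → ℝ := fun t => f t ^ n with hg
  have hgc : ∀ t ∈ Ici (0:ℝ), ContinuousAt g t := fun t ht =>
    ((hd t ht).continuousAt).pow n
  -- key claim: at a positive critical point, 𝓘 h = n * (f' h / f h)
  have key : ∀ h : ℝ, 0 < h → HasDerivAt 𝓘 0 h → 𝓘 h = n * (f' h / f h) := by
    intro h hh hcrit
    have hfh : 0 < f h := hpos h (le_of_lt hh)
    have hcont : ContinuousOn g (Icc (0:ℝ) h) := fun t ht =>
      (hgc t ht.1).continuousWithinAt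
    have hint : IntervalIntegrable g volume 0 h := by
      apply ContinuousOn.intervalIntegrable
      rwa [uIcc_of_le hh.le]
    have hIpos : 0 < ∫ t in (0:ℝ)..h, g t := by
      apply intervalIntegral.intervalIntegral_pos_of_pos_on hint _ hh
      intro t ht
      exact pow_pos (hpos t (le_of_lt ht.1)) n
    have hmeas : StronglyMeasurableAtFilter g (nhds h) volume := by
      refine ContinuousAt.stronglyMeasurableAtFilter isOpen_Ioi ?_ h hh
      intro x hx
      exact hgc x (mem_Ici.mpr (le_of_lt (mem_Ioi.mp hx)))
    have hI : HasDerivAt (fun u => ∫ t in (0:ℝ)..u, g t) (g h) h :=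
      intervalIntegral.integral_hasDerivAt_right hint hmeas (hgc h hh.le)
    have hgderiv : HasDerivAt g ((n : ℝ) * f h ^ (n - 1) * f' h) h := by
      have := (hd h hh.le).pow n
      exact this
    have hIne : (∫ t in (0:ℝ)..h, g t) ≠ 0 := ne_of_gt hIpos
    have h𝓘eq : 𝓘 = fun u => g u / ∫ t in (0:ℝ)..u, g t := funext fun u => h𝓘 u
    have hDiv : HasDerivAt 𝓘
        (((n : ℝ) * f h ^ (n - 1) * f' h * (∫ t in (0:ℝ)..h, g t) - g h * g h)
          / (∫ t in (0:ℝ)..h, g t) ^ 2) h := by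
      rw [h𝓘eq]
      exact hgderiv.div hI hIne
    have hz : ((n : ℝ) * f h ^ (n - 1) * f' h * (∫ t in (0:ℝ)..h, g t) - g h * g h)
        / (∫ t in (0:ℝ)..h, g t) ^ 2 = 0 := (hcrit.unique hDiv).symm
    rw [div_eq_zero_iff] at hz
    rcases hz with hz | hz
    · have heq : (n : ℝ) * f h ^ (n - 1) * f' h * (∫ t in (0:ℝ)..h, g t)
          = f h ^ n * f h ^ n := sub_eq_zero.mp hz
      rw [h𝓘 h]
      have hpow : f h ^ n = f h ^ (n - 1) * f h := by
        conv_lhs => rw [show n = (n - 1) + 1 from (Nat.succ_pred_eq_of_pos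
          (lt_of_lt_of_le one_pos hn)).symm]
        rw [pow_succ]
      have hfne : f h ≠ 0 := ne_of_gt hfh
      have hfpne : f h ^ (n - 1) ≠ 0 := pow_ne_zero _ hfne
      rw [div_eq_iff hIne]
      field_simp
      apply mul_left_cancel₀ hfpne
      calc f h ^ (n - 1) * (f h ^ n * f h) = f h ^ n * f h ^ n := by rw [hpow]; ring
        _ = (n : ℝ) * f h ^ (n - 1) * f' h * (∫ t in (0:ℝ)..h, g t) := heq.symm
        _ = f h ^ (n - 1) * ((n : ℝ) * f' h * ∫ t in (0:ℝ)..h, g t) := by ring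
    · exact absurd hz (pow_ne_zero 2 hIne)
  have e₁ := key h₁ hh₁ hcrit₁
  have e₂ := key h₂ (hh₁.trans hlt) hcrit₂
  rw [e₁, e₂]
  have := hmono (le_of_lt hh₁) (le_of_lt (hh₁.trans hlt)) hlt.le
  have hn0 : (0:ℝ) ≤ n := Nat.cast_nonneg n
  exact mul_le_mul_of_nonneg_left this hn0
end

section
/- Let f : [0,∞) → (0,∞) be differentiable with log f convex, f nonconstant and unbounded. If 𝓘(h) = f(h)ⁿ/∫₀ʰ fⁿ has no critical points on (0,∞), then 𝓘(h) ≥ lim_{h'→∞} n f'(h')/f(h') for all h > 0. -/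
open Set MeasureTheory intervalIntegral Filter Topology

/-- if `𝓘(h) = f(h)ⁿ / ∫₀ʰ fⁿ` has no critical points on `(0,∞)`
(for `f` positive, differentiable, log-convex, nonconstant, unbounded), then
`𝓘(h) ≥ lim_{h'→∞} n·f'(h')/f(h')` for all `h > 0`. -/
theorem stmt11 (f f' : ℝ → ℝ)
    (hpos : ∀ t ∈ Ici (0 : ℝ), 0 < f t)
    (hd : ∀ t ∈ Ici (0 : ℝ), HasDerivAt f (f' t) t)
    (hlc : ConvexOn ℝ (Ici 0) (fun t => Real.log (f t)))
    (hnc : ∃ a ∈ Ici (0 : ℝ), ∃ b ∈ Ici (0 : ℝ), f a ≠ f b)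
    (hub : ¬ BddAbove (f '' Ici 0))
    (n : ℕ) (hn : 1 ≤ n)
    (𝓘 : ℝ → ℝ) (h𝓘 : ∀ h, 𝓘 h = f h ^ n / ∫ t in (0:ℝ)..h, f t ^ n)
    (hnocrit : ∀ h > (0 : ℝ), deriv 𝓘 h ≠ 0)
    (L : ℝ) (hL : Tendsto (fun h => n * f' h / f h) atTop (𝓝 L)) :
    ∀ h > (0 : ℝ), L ≤ 𝓘 h := by
  obtain ⟨k, rfl⟩ : ∃ k, n = k + 1 := ⟨n - 1, (Nat.succ_pred_eq_of_pos hn).symm⟩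
  set n := k + 1 with hnk
  set g : ℝ → ℝ := fun t => f t ^ n with hgdef
  have hfc : ∀ t ∈ Ici (0:ℝ), ContinuousAt f t := fun t ht => (hd t ht).continuousAt
  have hgc : ∀ t ∈ Ici (0:ℝ), ContinuousAt g t := fun t ht => (hfc t ht).pow n
  have hgpos : ∀ t ∈ Ici (0:ℝ), 0 < g t := fun t ht => pow_pos (hpos t ht) n
  set F : ℝ → ℝ := fun h => ∫ t in (0:ℝ)..h, g t with hFdef
  have hint : ∀ h ≥ (0:ℝ), IntervalIntegrable g volume 0 h := by
    intro h hh
    apply ContinuousOn.intervalIntegrable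
    intro t ht
    rw [uIcc_of_le hh] at ht
    exact (hgc t ht.1).continuousWithinAt
  have hFpos : ∀ h > (0:ℝ), 0 < F h := fun h hh =>
    intervalIntegral_pos_of_pos_on (hint h hh.le)
      (fun t ht => hgpos t (le_of_lt ht.1)) hh
  have h𝓘F : ∀ h, 𝓘 h = g h / F h := fun h => h𝓘 h
  have h𝓘pos : ∀ h > (0:ℝ), 0 < 𝓘 h := by
    intro h hh
    rw [h𝓘F h]
    exact div_pos (hgpos h hh.le) (hFpos h hh)
  have hgcont : ContinuousOn g (Ioi 0) := fun t ht => (hgc t (mem_Ici.2 (le_of_lt ht))).continuousWithinAt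
  have hFd : ∀ h > (0:ℝ), HasDerivAt F (g h) h := by
    intro h hh
    exact intervalIntegral.integral_hasDerivAt_right (hint h hh.le)
      (hgcont.stronglyMeasurableAtFilter isOpen_Ioi h hh) (hgc h hh.le)
  -- derivative formula
  have h𝓘d : ∀ h > (0:ℝ), HasDerivAt 𝓘 (𝓘 h * (n * f' h / f h - 𝓘 h)) h := by
    intro h hh
    have hnum : HasDerivAt (fun t => f t ^ n) ((n : ℝ) * f h ^ (n - 1) * f' h) h :=
      (hd h hh.le).pow n
    have hdiv := hnum.div (hFd h hh) (hFpos h hh).ne'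
    have hfun : 𝓘 = fun t => f t ^ n / F t := funext fun t => h𝓘 t
    have hf0 : f h ≠ 0 := (hpos h hh.le).ne'
    have hF0 : F h ≠ 0 := (hFpos h hh).ne'
    have hval : 𝓘 h * ((n:ℝ) * f' h / f h - 𝓘 h)
        = ((n:ℝ) * f h ^ (n - 1) * f' h * F h - f h ^ n * g h) / F h ^ 2 := by
      rw [h𝓘F h]
      simp only [hgdef, show n - 1 = k from rfl, hnk, Nat.add_sub_cancel, pow_succ]
      field_simp
    rw [hval, hfun]
    exact hdiv
  have hdiff : ∀ h > (0:ℝ), DifferentiableAt ℝ 𝓘 h :=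
    fun h hh => (h𝓘d h hh).differentiableAt
  -- derivative is everywhere negative on (0,∞)
  have hneg : ∀ h > (0:ℝ), deriv 𝓘 h < 0 := by
    intro b hb
    rcases lt_or_gt_of_ne (hnocrit b hb) with h1 | h1
    · exact h1
    exfalso
    -- deriv 𝓘 > 0 on (0, b]
    have hposder : ∀ a ∈ Ioo (0:ℝ) b, 0 < deriv 𝓘 a := by
      intro a ha
      rcases lt_or_gt_of_ne (hnocrit a ha.1) with h2 | h2
      · exfalso
        have hD : ∀ x ∈ Icc a b, HasDerivWithinAt 𝓘 (deriv 𝓘 x) (Icc a b) x := by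
          intro x hx
          exact ((hdiff x (lt_of_lt_of_le ha.1 hx.1)).hasDerivAt).hasDerivWithinAt
        obtain ⟨c, hc, hc0⟩ :=
          exists_hasDerivWithinAt_eq_of_gt_of_lt (le_of_lt ha.2) hD h2 h1 (m := 0)
        exact hnocrit c (lt_trans ha.1 hc.1) hc0
      · exact h2
    -- 𝓘 strictly monotone on Ioc 0 b
    have hmono : StrictMonoOn 𝓘 (Ioc 0 b) := by
      apply strictMonoOn_of_deriv_pos (convex_Ioc 0 b)
      · exact fun x hx => ((hdiff x hx.1).continuousAt).continuousWithinAt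
      · intro x hx
        rw [interior_Ioc] at hx
        exact hposder x hx
    -- 𝓘 blows up near 0 : find a small with 𝓘 a > 𝓘 b
    obtain ⟨t0, ht0, hMmax⟩ := isCompact_Icc.exists_isMaxOn (nonempty_Icc.2 hb.le)
      (fun t ht => (hgc t ht.1).continuousWithinAt)
    set M := g t0 with hMdef
    have hM : 0 < M := hgpos t0 ht0.1
    set c := g 0 / 2 with hcdef
    have hc : 0 < c := half_pos (hgpos 0 self_mem_Ici)
    have hev : ∀ᶠ t in 𝓝 (0:ℝ), c < g t :=
      (hgc 0 self_mem_Ici).eventually (eventually_gt_nhds (half_lt_self (hgpos 0 self_mem_Ici)))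
    obtain ⟨δ, hδ, hδc⟩ := Metric.eventually_nhds_iff.mp hev
    set a := min (δ/2) (min (b/2) (c / (2 * M * 𝓘 b))) with hadef
    have hIb : 0 < 𝓘 b := h𝓘pos b hb
    have ha0 : 0 < a := by
      apply lt_min (half_pos hδ) (lt_min (half_pos hb) _)
      positivity
    have hab : a < b := lt_of_le_of_lt (le_trans (min_le_right _ _) (min_le_left _ _))
      (half_lt_self hb)
    have hga : c < g a := by
      apply hδc
      rw [Real.dist_eq, sub_zero, abs_of_pos ha0]
      exact lt_of_le_of_lt (min_le_left _ _) (half_lt_self hδ)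
    have hFa : F a ≤ a * M := by
      have : F a ≤ ∫ _ in (0:ℝ)..a, M := by
        apply intervalIntegral.integral_mono_on ha0.le (hint a ha0.le)
          intervalIntegrable_const
        intro x hx
        exact hMmax ⟨hx.1, le_trans hx.2 hab.le⟩
      simpa [mul_comm] using this
    have hIa : c / (a * M) ≤ 𝓘 a := by
      rw [h𝓘F a]
      have hFa0 : 0 < F a := hFpos a ha0
      exact div_le_div₀ (hgpos a ha0.le).le hga.le hFa0 hFa
    have hIba : 𝓘 b < c / (a * M) := by
      rw [lt_div_iff₀ (by positivity)]
      have haM : a ≤ c / (2 * M * 𝓘 b) := le_trans (min_le_right _ _) (min_le_right _ _)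
      have : 𝓘 b * (a * M) ≤ 𝓘 b * ((c / (2 * M * 𝓘 b)) * M) := by
        gcongr
      calc 𝓘 b * (a * M) ≤ 𝓘 b * ((c / (2 * M * 𝓘 b)) * M) := this
        _ = c / 2 := by field_simp
        _ < c := half_lt_self hc
    have := hmono ⟨ha0, hab.le⟩ ⟨hb, le_rfl⟩ hab
    linarith
  -- 𝓘 strictly antitone on (0,∞)
  have hanti : StrictAntiOn 𝓘 (Ioi 0) := by
    apply strictAntiOn_of_deriv_neg (convex_Ioi 0)
    · exact fun x hx => ((hdiff x hx).continuousAt).continuousWithinAt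
    · intro x hx
      rw [interior_Ioi] at hx
      exact hneg x hx
  -- 𝓘 > n f'/f on (0,∞)
  have hgt : ∀ h > (0:ℝ), (n : ℝ) * f' h / f h < 𝓘 h := by
    intro h hh
    have hder := (h𝓘d h hh).deriv
    have := hneg h hh
    rw [hder] at this
    have hI := h𝓘pos h hh
    nlinarith [mul_pos hI hI]
  -- conclude by passing to the limit
  intro h hh
  refine le_of_tendsto hL ?_
  filter_upwards [eventually_ge_atTop (h + 1)] with x hx
  have hxh : h < x := by linarith
  have hx0 : (0:ℝ) < x := lt_trans hh hxh
  exact le_of_lt (lt_trans (hgt x hx0) (hanti (mem_Ioi.2 hh) (mem_Ioi.2 hx0) hxh))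
end

section
/- Let f : [0,∞) → (0,∞) be log-convex and continuous. Then for any k ≥ 1, t ↦ f(t)^k is log-convex, and, with I(h)=∫₀ʰ f^k, for weights λ ∈ [0,1] and heights h₁ ≤ h₂, if I(H) = λ I(h₁) + (1−λ) I(h₂), then f(H)^k ≤ λ f(h₁)^k + (1−λ) f(h₂)^k. -/
open Set MeasureTheory intervalIntegral


lemma chord_le {L : ℝ → ℝ} (hL : ConvexOn ℝ (Ici 0) L) {x z t : ℝ}
    (hx : 0 ≤ x) (hz : 0 ≤ z) (hxt : x ≤ t) (htz : t ≤ z) (hxz : x < z) :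
    L t ≤ L x + (L z - L x) / (z - x) * (t - x) := by
  have hzx : (0:ℝ) < z - x := by linarith
  have hμ0 : 0 ≤ (z - t) / (z - x) := div_nonneg (by linarith) hzx.le
  have hν0 : 0 ≤ (t - x) / (z - x) := div_nonneg (by linarith) hzx.le
  have hsum : (z - t) / (z - x) + (t - x) / (z - x) = 1 := by
    field_simp
    ring
  have key := hL.2 (mem_Ici.2 hx) (mem_Ici.2 hz) hμ0 hν0 hsum
  simp only [smul_eq_mul] at key
  have ht : (z - t) / (z - x) * x + (t - x) / (z - x) * z = t := by
    field_simp; ring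
  rw [ht] at key
  have heq : (z - t) / (z - x) * L x + (t - x) / (z - x) * L z
      = L x + (L z - L x) / (z - x) * (t - x) := by
    field_simp; ring
  linarith [key, heq.ge, heq.le]

lemma chord_ge_left {L : ℝ → ℝ} (hL : ConvexOn ℝ (Ici 0) L) {t c z : ℝ}
    (ht : 0 ≤ t) (hz : 0 ≤ z) (htc : t ≤ c) (hcz : c < z) :
    L c + (L z - L c) / (z - c) * (t - c) ≤ L t := by
  rcases eq_or_lt_of_le htc with rfl | htc
  · simp
  · have key := hL.slope_mono_adjacent (mem_Ici.2 ht) (mem_Ici.2 hz) htc hcz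
    have h1 : (0:ℝ) < c - t := by linarith
    have h2 : (0:ℝ) < z - c := by linarith
    rw [div_le_div_iff₀ h1 h2] at key
    rw [div_mul_eq_mul_div, ← sub_nonneg]
    have : L t - (L c + (L z - L c) * (t - c) / (z - c))
        = ((L z - L c) * (c - t) - (L c - L t) * (z - c)) / (z - c) := by
      field_simp; ring
    rw [this]
    apply div_nonneg _ h2.le
    linarith [key]

lemma chord_ge_right {L : ℝ → ℝ} (hL : ConvexOn ℝ (Ici 0) L) {x c t : ℝ}
    (hx : 0 ≤ x) (ht : 0 ≤ t) (hxc : x < c) (hct : c ≤ t) :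
    L c + (L c - L x) / (c - x) * (t - c) ≤ L t := by
  rcases eq_or_lt_of_le hct with rfl | hct
  · simp
  · have key := hL.slope_mono_adjacent (mem_Ici.2 hx) (mem_Ici.2 ht) hxc hct
    have h1 : (0:ℝ) < c - x := by linarith
    have h2 : (0:ℝ) < t - c := by linarith
    rw [div_le_div_iff₀ h1 h2] at key
    rw [div_mul_eq_mul_div, ← sub_nonneg]
    have : L t - (L c + (L c - L x) * (t - c) / (c - x))
        = ((L t - L c) * (c - x) - (L c - L x) * (t - c)) / (c - x) := by
      field_simp; ring
    rw [this]
    apply div_nonneg _ h1.le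
    linarith [key]


lemma exp_int (C m c x y : ℝ) (hm : m ≠ 0) :
    ∫ t in x..y, C * Real.exp (m * (t - c))
      = C / m * (Real.exp (m * (y - c)) - Real.exp (m * (x - c))) := by
  have hderiv : ∀ t ∈ uIcc x y,
      HasDerivAt (fun t => C / m * Real.exp (m * (t - c))) (C * Real.exp (m * (t - c))) t := by
    intro t _
    have h1 : HasDerivAt (fun t : ℝ => m * (t - c)) m t := by
      simpa using ((hasDerivAt_id t).sub_const c).const_mul m
    have h2 := (h1.exp).const_mul (C / m)
    refine h2.congr_deriv ?_
    rw [mul_comm (Real.exp _) m, ← mul_assoc, div_mul_cancel₀ _ hm]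
  rw [integral_eq_sub_of_hasDerivAt hderiv ((Continuous.intervalIntegrable (by continuity) x y))]
  ring

lemma key_ineq (g : ℝ → ℝ) (hc : ContinuousOn g (Ici 0)) (hp : ∀ t ∈ Ici (0:ℝ), 0 < g t)
    (hlc : ConvexOn ℝ (Ici 0) (fun t => Real.log (g t)))
    {a c b : ℝ} (ha : 0 ≤ a) (hac : a ≤ c) (hcb : c ≤ b) :
    (∫ t in c..b, g t) * (g c - g a) ≤ (∫ t in a..c, g t) * (g b - g c) := by
  set L : ℝ → ℝ := fun t => Real.log (g t) with hLdef
  have hc0 : 0 ≤ c := le_trans ha hac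
  have hb0 : 0 ≤ b := le_trans hc0 hcb
  have gexp : ∀ t : ℝ, 0 ≤ t → g t = Real.exp (L t) := fun t ht =>
    (Real.exp_log (hp t ht)).symm
  have intg : ∀ x y : ℝ, 0 ≤ x → x ≤ y → IntervalIntegrable g volume x y := by
    intro x y hx hxy
    apply ContinuousOn.intervalIntegrable
    rw [uIcc_of_le hxy]
    exact hc.mono (fun t htm => le_trans hx htm.1)
  -- degenerate cases
  rcases eq_or_lt_of_le hac with rfl | hac'
  · simp
  rcases eq_or_lt_of_le hcb with rfl | hcb'
  · simp
  set m : ℝ := (L c - L a) / (c - a) with hm_def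
  set m' : ℝ := (L b - L c) / (b - c) with hm'_def
  have hca : (0:ℝ) < c - a := by linarith
  have hbc : (0:ℝ) < b - c := by linarith
  have hmca : m * (c - a) = L c - L a := div_mul_cancel₀ _ hca.ne'
  have hm'bc : m' * (b - c) = L b - L c := div_mul_cancel₀ _ hbc.ne'
  have hX0 : 0 ≤ ∫ t in a..c, g t :=
    intervalIntegral.integral_nonneg hac'.le
      (fun u hu => (hp u (le_trans ha hu.1)).le)
  have hY0 : 0 ≤ ∫ t in c..b, g t :=
    intervalIntegral.integral_nonneg hcb'.le
      (fun u hu => (hp u (le_trans hc0 hu.1)).le)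
  by_cases hm' : 0 < m'
  · -- right exponential E' t = g c * exp (m' * (t - c))
    have hgb : g b = g c * Real.exp (m' * (b - c)) := by
      rw [gexp b hb0, gexp c hc0, ← Real.exp_add]
      congr 1; linarith [hm'bc]
    have ptA : ∀ t ∈ Icc c b, g t ≤ g c * Real.exp (m' * (t - c)) := by
      intro t htm
      rw [gexp t (le_trans hc0 htm.1), gexp c hc0, ← Real.exp_add]
      apply Real.exp_le_exp.2
      have := chord_le hlc hc0 hb0 htm.1 htm.2 hcb'
      linarith [this]
    have ptB : ∀ t ∈ Icc a c, g c * Real.exp (m' * (t - c)) ≤ g t := by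
      intro t htm
      rw [gexp t (le_trans ha htm.1), gexp c hc0, ← Real.exp_add]
      apply Real.exp_le_exp.2
      have := chord_ge_left hlc (le_trans ha htm.1) hb0 htm.2 hcb'
      linarith [this]
    have intY : (∫ t in c..b, g t) ≤ (g b - g c) / m' := by
      have h1 : (∫ t in c..b, g t) ≤ ∫ t in c..b, g c * Real.exp (m' * (t - c)) :=
        integral_mono_on hcb'.le (intg c b hc0 hcb'.le)
          ((Continuous.intervalIntegrable (by fun_prop) c b)) ptA
      rw [exp_int _ _ _ _ _ hm'.ne'] at h1
      have h2 : g c / m' * (Real.exp (m' * (b - c)) - Real.exp (m' * (c - c)))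
          = (g b - g c) / m' := by
        rw [sub_self, mul_zero, Real.exp_zero, hgb]; ring
      linarith [h1, h2.le, h2.ge]
    have intX : (g c - g a) / m' ≤ ∫ t in a..c, g t := by
      have h1 : (∫ t in a..c, g c * Real.exp (m' * (t - c))) ≤ ∫ t in a..c, g t :=
        integral_mono_on hac'.le
          ((Continuous.intervalIntegrable (by fun_prop) a c)) (intg a c ha hac'.le) ptB
      rw [exp_int _ _ _ _ _ hm'.ne'] at h1
      have hEa : g c * Real.exp (m' * (a - c)) ≤ g a := ptB a ⟨le_refl a, hac'.le⟩
      have hEq : g c / m' * (Real.exp (m' * (c - c)) - Real.exp (m' * (a - c)))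
          = (g c - g c * Real.exp (m' * (a - c))) / m' := by
        rw [sub_self, mul_zero, Real.exp_zero]; ring
      have h2 : (g c - g a) / m'
          ≤ g c / m' * (Real.exp (m' * (c - c)) - Real.exp (m' * (a - c))) := by
        rw [hEq, div_le_div_iff_of_pos_right hm']
        linarith [hEa]
      linarith [h1, h2]
    have hQ : 0 < g b - g c := by
      rw [hgb]
      have : 1 < Real.exp (m' * (b - c)) := by
        rw [← Real.exp_zero]
        exact Real.exp_lt_exp.2 (by positivity)
      nlinarith [hp c hc0]
    rcases le_or_gt (g c - g a) 0 with hP | hP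
    · have h1 : (∫ t in c..b, g t) * (g c - g a) ≤ 0 := mul_nonpos_of_nonneg_of_nonpos hY0 hP
      have h2 : 0 ≤ (∫ t in a..c, g t) * (g b - g c) := mul_nonneg hX0 hQ.le
      linarith
    · have h1 : (∫ t in c..b, g t) * (g c - g a) ≤ (g b - g c) / m' * (g c - g a) :=
        mul_le_mul_of_nonneg_right intY hP.le
      have h2 : (g b - g c) / m' * (g c - g a) = (g c - g a) / m' * (g b - g c) := by ring
      have h3 : (g c - g a) / m' * (g b - g c) ≤ (∫ t in a..c, g t) * (g b - g c) :=
        mul_le_mul_of_nonneg_right intX hQ.le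
      linarith
  · by_cases hm : m < 0
    · -- left exponential E t = g c * exp (m * (t - c))
      have hga : g a = g c * Real.exp (m * (a - c)) := by
        rw [gexp a ha, gexp c hc0, ← Real.exp_add]
        congr 1; nlinarith [hmca]
      have ptA : ∀ t ∈ Icc a c, g t ≤ g c * Real.exp (m * (t - c)) := by
        intro t htm
        rw [gexp t (le_trans ha htm.1), gexp c hc0, ← Real.exp_add]
        apply Real.exp_le_exp.2
        have := chord_le hlc ha hc0 htm.1 htm.2 hac'
        nlinarith [this, hmca]
      have ptB : ∀ t ∈ Icc c b, g c * Real.exp (m * (t - c)) ≤ g t := by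
        intro t htm
        rw [gexp t (le_trans hc0 htm.1), gexp c hc0, ← Real.exp_add]
        apply Real.exp_le_exp.2
        have := chord_ge_right hlc ha (le_trans hc0 htm.1) hac' htm.1
        linarith [this]
      have intX : (∫ t in a..c, g t) ≤ (g c - g a) / m := by
        have h1 : (∫ t in a..c, g t) ≤ ∫ t in a..c, g c * Real.exp (m * (t - c)) :=
          integral_mono_on hac'.le (intg a c ha hac'.le)
            ((Continuous.intervalIntegrable (by fun_prop) a c)) ptA
        rw [exp_int _ _ _ _ _ hm.ne] at h1
        have h2 : g c / m * (Real.exp (m * (c - c)) - Real.exp (m * (a - c)))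
            = (g c - g a) / m := by
          rw [sub_self, mul_zero, Real.exp_zero, hga]; ring
        linarith [h1, h2.le, h2.ge]
      have intY : (g b - g c) / m ≤ ∫ t in c..b, g t := by
        have h1 : (∫ t in c..b, g c * Real.exp (m * (t - c))) ≤ ∫ t in c..b, g t :=
          integral_mono_on hcb'.le
            ((Continuous.intervalIntegrable (by fun_prop) c b)) (intg c b hc0 hcb'.le) ptB
        rw [exp_int _ _ _ _ _ hm.ne] at h1
        have hEb : g c * Real.exp (m * (b - c)) ≤ g b := ptB b ⟨hcb'.le, le_refl b⟩
        have hEq : g c / m * (Real.exp (m * (b - c)) - Real.exp (m * (c - c)))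
            = (g c * Real.exp (m * (b - c)) - g c) / m := by
          rw [sub_self, mul_zero, Real.exp_zero]; ring
        have h2 : (g b - g c) / m
            ≤ g c / m * (Real.exp (m * (b - c)) - Real.exp (m * (c - c))) := by
          rw [hEq, div_le_div_right_of_neg hm]
          linarith [hEb]
        linarith [h1, h2]
      have hP : g c - g a < 0 := by
        rw [hga]
        have : 1 < Real.exp (m * (a - c)) := by
          rw [← Real.exp_zero]
          exact Real.exp_lt_exp.2 (by nlinarith)
        nlinarith [hp c hc0]
      rcases le_or_gt 0 (g b - g c) with hQ | hQ
      · have h1 : (∫ t in c..b, g t) * (g c - g a) ≤ 0 :=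
          mul_nonpos_of_nonneg_of_nonpos hY0 hP.le
        have h2 : 0 ≤ (∫ t in a..c, g t) * (g b - g c) := mul_nonneg hX0 hQ
        linarith
      · have h1 : (∫ t in c..b, g t) * (g c - g a) ≤ (g b - g c) / m * (g c - g a) :=
          mul_le_mul_of_nonpos_right intY hP.le
        have h2 : (g b - g c) / m * (g c - g a) = (g c - g a) / m * (g b - g c) := by ring
        have h3 : (g c - g a) / m * (g b - g c) ≤ (∫ t in a..c, g t) * (g b - g c) := by
          apply mul_le_mul_of_nonpos_right _ hQ.le
          exact intX
        linarith
    · -- m ≥ 0 and m' ≤ 0 : forces m = m' = 0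
      push_neg at hm hm'
      have hmm' : m ≤ m' :=
        hlc.slope_mono_adjacent (mem_Ici.2 ha) (mem_Ici.2 hb0) hac' hcb'
      have hm0 : m = 0 := le_antisymm (le_trans hmm' hm') hm
      have hm'0 : m' = 0 := le_antisymm hm' (hm0 ▸ hmm')
      have hLa : L a = L c := by
        have := hmca; rw [hm0] at this; linarith
      have hLb : L b = L c := by
        have := hm'bc; rw [hm'0] at this; linarith
      have hga : g a = g c := by rw [gexp a ha, gexp c hc0, hLa]
      have hgb : g b = g c := by rw [gexp b hb0, gexp c hc0, hLb]
      rw [hga, hgb]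
      simp

/-- for continuous positive log-convex `f` on `[0,∞)` and `k ≥ 1`,
`f^k` is log-convex, and the two-point Jensen inequality holds: with
`I(h) = ∫₀ʰ f^k`, if `I(H) = λ I(h₁) + (1−λ) I(h₂)` then
`f(H)^k ≤ λ f(h₁)^k + (1−λ) f(h₂)^k`. -/
theorem stmt16 (f : ℝ → ℝ)
    (hpos : ∀ t ∈ Ici (0 : ℝ), 0 < f t)
    (hcont : ContinuousOn f (Ici 0))
    (hlc : ConvexOn ℝ (Ici 0) (fun t => Real.log (f t)))
    (k : ℕ) (hk : 1 ≤ k)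
    (I : ℝ → ℝ) (hI : ∀ h, I h = ∫ t in (0:ℝ)..h, f t ^ k) :
    (ConvexOn ℝ (Ici 0) (fun t => Real.log (f t ^ k))) ∧
    (∀ lam : ℝ, lam ∈ Icc (0:ℝ) 1 → ∀ h₁ h₂ H : ℝ,
      0 ≤ h₁ → h₁ ≤ h₂ → 0 ≤ H →
      I H = lam * I h₁ + (1 - lam) * I h₂ →
      f H ^ k ≤ lam * f h₁ ^ k + (1 - lam) * f h₂ ^ k) := by
  set g : ℝ → ℝ := fun t => f t ^ k with hg_def
  have hgp : ∀ t ∈ Ici (0:ℝ), 0 < g t := fun t ht => pow_pos (hpos t ht) k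
  have hgc : ContinuousOn g (Ici 0) := hcont.pow k
  have hglc : ConvexOn ℝ (Ici 0) (fun t => Real.log (g t)) := by
    have h := hlc.smul (c := (k:ℝ)) (by positivity)
    show ConvexOn ℝ (Ici 0) fun t => Real.log (f t ^ k)
    simpa [Real.log_pow] using h
  refine ⟨hglc, ?_⟩
  intro lam hlam h₁ h₂ H hh₁ h12 hH0 heq
  obtain ⟨hlam0, hlam1⟩ := hlam
  have intg : ∀ x y : ℝ, 0 ≤ x → x ≤ y → IntervalIntegrable g volume x y := by
    intro x y hx hxy
    apply ContinuousOn.intervalIntegrable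
    rw [uIcc_of_le hxy]
    exact hgc.mono (fun t htm => le_trans hx htm.1)
  have hIdiff : ∀ x y : ℝ, 0 ≤ x → x ≤ y → I y - I x = ∫ t in x..y, g t := by
    intro x y hx hxy
    rw [hI, hI]
    exact integral_interval_sub_left (intg 0 y (le_refl 0) (le_trans hx hxy))
      (intg 0 x (le_refl 0) hx)
  have hIpos : ∀ x y : ℝ, 0 ≤ x → x < y → 0 < ∫ t in x..y, g t := by
    intro x y hx hxy
    apply intervalIntegral.intervalIntegral_pos_of_pos_on
    · exact intg x y hx hxy.le
    · exact fun u hu => hgp u (le_trans hx hu.1.le)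
    · exact hxy
  have hImono : ∀ x y : ℝ, 0 ≤ x → x < y → I x < I y := by
    intro x y hx hxy
    have := hIpos x y hx hxy
    have h2 := hIdiff x y hx hxy.le
    linarith
  have hImono' : ∀ x y : ℝ, 0 ≤ x → x ≤ y → I x ≤ I y := by
    intro x y hx hxy
    rcases eq_or_lt_of_le hxy with rfl | h
    · exact le_refl _
    · exact (hImono x y hx h).le
  have hI12 : I h₁ ≤ I h₂ := hImono' h₁ h₂ hh₁ h12
  have hIH1 : I h₁ ≤ I H := by nlinarith
  have hIH2 : I H ≤ I h₂ := by nlinarith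
  have hH1 : h₁ ≤ H := by
    by_contra hcon
    push_neg at hcon
    exact absurd hIH1 (not_le.2 (hImono H h₁ hH0 hcon))
  have hH2 : H ≤ h₂ := by
    by_contra hcon
    push_neg at hcon
    exact absurd hIH2 (not_le.2 (hImono h₂ H (le_trans hh₁ h12) hcon))
  set X : ℝ := ∫ t in h₁..H, g t with hX_def
  set Y : ℝ := ∫ t in H..h₂, g t with hY_def
  have hXI : I H - I h₁ = X := hIdiff h₁ H hh₁ hH1
  have hYI : I h₂ - I H = Y := hIdiff H h₂ hH0 hH2
  have key := key_ineq g hgc hgp hglc hh₁ hH1 hH2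
  rw [← hX_def, ← hY_def] at key
  have hlamXY : lam * X = (1 - lam) * Y := by
    linear_combination heq + (-lam) * hXI + (1 - lam) * hYI
  have hX0 : 0 ≤ X := by
    rcases eq_or_lt_of_le hH1 with h | h
    · simp [hX_def, ← h]
    · exact (hIpos h₁ H hh₁ h).le
  have hY0 : 0 ≤ Y := by
    rcases eq_or_lt_of_le hH2 with h | h
    · simp [hY_def, h]
    · exact (hIpos H h₂ hH0 h).le
  show g H ≤ lam * g h₁ + (1 - lam) * g h₂
  clear_value X Y g
  rcases eq_or_lt_of_le hH1 with hA | hA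
  · -- h₁ = H
    rcases eq_or_lt_of_le hH2 with hB | hB
    · rw [hA, hB]
      have : lam * g h₂ + (1 - lam) * g h₂ = g h₂ := by ring
      linarith
    · -- h₁ = H < h₂ : X = 0, Y > 0 ⇒ lam = 1
      have hXz : X = 0 := by simp [hX_def, hA]
      have hYp : 0 < Y := hY_def ▸ hIpos H h₂ hH0 hB
      have : lam = 1 := by nlinarith
      rw [this, ← hA]
      nlinarith
  · rcases eq_or_lt_of_le hH2 with hB | hB
    · have hYz : Y = 0 := by simp [hY_def, hB]
      have hXp : 0 < X := hX_def ▸ hIpos h₁ H hh₁ hA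
      have : lam = 0 := by nlinarith
      rw [this, hB]
      nlinarith
    · have hXp : 0 < X := hX_def ▸ hIpos h₁ H hh₁ hA
      have hYp : 0 < Y := hY_def ▸ hIpos H h₂ hH0 hB
      have hs : (0:ℝ) < X + Y := by linarith
      have h5 : lam * (X + Y) = Y := by linear_combination hlamXY
      have h7 : (1 - lam) * (X + Y) = X := by linear_combination - hlamXY
      have h6 : (lam * g h₁ + (1 - lam) * g h₂ - g H) * (X + Y)
          = Y * (g h₁ - g H) + X * (g h₂ - g H) := by
        linear_combination g h₁ * h5 + g h₂ * h7 + (- g H) * h5 + (- g H) * h7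
      nlinarith [key, h6, hs]
end
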